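/- arXiv:2312.04244 — 4 statements merged into one kernel-verified Lean document; each statement's English description precedes it below -/
import Mathlib

section
/- The set of minimal homeomorphisms of a compact metric space X is a G_δ subset of the space Homeo(X) of homeomorphisms of X equipped with the uniform metric. Specifically, Homeo^min(X) = ⋂_{ε ∈ ℚ⁺} ⋃_{M ∈ ℕ} U^min_{M,ε}, where U^min_{M,ε} = {ψ ∈ Homeo(X) : ∀ x ∈ X, {x, ψ(x), …, ψ^M(x)} is ε-dense in X}, and each U^min_{M,ε} is open. -/
/-!
A minimal homeomorphism `ψ` of a compact space has dense forward orbits: the ω-limit set of `x`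
is nonempty, closed and invariant under `ψ` and `ψ⁻¹`, so it contains a dense two-sided orbit and
is all of `X`; and it lies in the closure of the forward orbit of `x`. Covering the compact space
`X × X` by the increasing open sets `{(x, z) | ∃ i ≤ M, dist z (ψ^i x) < ε}` then gives a uniform
`M` for each `ε`. Openness of `U^min_{M,ε}` comes from the joint continuity of `(ψ, x) ↦ ψ^i x`:
the complement of `U^min_{M,ε}` is the projection of a closed subset of `Homeo(X) × X × X` along
the compact factor `X × X`, hence closed.
-/

open Filter Finset

/-- The uniform metric `d₀(φ,ψ) = max(sup_x d(φ x, ψ x), sup_x d(φ⁻¹ x, ψ⁻¹ x))`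
on the homeomorphism group of a compact metric space. -/
noncomputable instance homeoMetricSpace {X : Type*} [MetricSpace X] [CompactSpace X] :
    MetricSpace (X ≃ₜ X) :=
  MetricSpace.induced
    (fun φ : X ≃ₜ X =>
      ((⟨⇑φ, φ.continuous⟩ : C(X, X)), (⟨⇑φ.symm, φ.symm.continuous⟩ : C(X, X))))
    (fun φ ψ h => by
      apply Homeomorph.ext
      intro x
      exact DFunLike.congr_fun (congrArg Prod.fst h) x)
    inferInstance

open Set

namespace Homeomorph

variable {X : Type*} [TopologicalSpace X] (ψ : X ≃ₜ X)

theorem eq_univ_of_isClosed_of_mapsTo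
    (hψ : ∀ x : X, Dense {y | ∃ n : ℕ, y = ψ^[n] x ∨ y = ψ.symm^[n] x})
    {K : Set X} (hK : IsClosed K) (hne : K.Nonempty) (hfw : MapsTo ψ K K)
    (hbw : MapsTo ψ.symm K K) : K = univ := by
  obtain ⟨y, hy⟩ := hne
  have horbit : {z | ∃ n : ℕ, z = ψ^[n] y ∨ z = ψ.symm^[n] y} ⊆ K := by
    rintro z ⟨n, rfl | rfl⟩
    exacts [hfw.iterate n hy, hbw.iterate n hy]
  exact hK.closure_eq ▸ ((hψ y).mono horbit).closure_eq

theorem denseRange_iterate [CompactSpace X]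
    (hψ : ∀ x : X, Dense {y | ∃ n : ℕ, y = ψ^[n] x ∨ y = ψ.symm^[n] x}) (x : X) :
    DenseRange fun n : ℕ => ψ^[n] x := by
  set Ω := omegaLimit atTop (fun n y => ψ^[n] y) {x}
  have hfw : MapsTo ψ Ω Ω :=
    (mapsTo_omegaLimit _ (mapsTo_id _) (fun n y => (Function.iterate_succ_apply' ψ n y).symm)
      ψ.continuous).mono_right (omegaLimit_subset_of_tendsto _ _ (tendsto_add_atTop_nat 1))
  have hbw : MapsTo ψ.symm Ω Ω := by
    refine (mapsTo_omegaLimit' _ (mapsTo_id _) ?_ ψ.symm.continuous).mono_right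
      (omegaLimit_subset_of_tendsto _ _ (tendsto_sub_atTop_nat 1))
    refine eventually_atTop.2 ⟨1, fun n hn y _ => ?_⟩
    obtain ⟨k, rfl⟩ := Nat.exists_eq_add_of_le' hn
    simp [Function.iterate_succ_apply']
  have hΩ : Ω = univ := eq_univ_of_isClosed_of_mapsTo ψ hψ (isClosed_omegaLimit _ _ _)
    (nonempty_omegaLimit _ _ _ (singleton_nonempty x)) hfw hbw
  have hsub : Ω ⊆ closure (image2 (fun n y => ψ^[n] y) univ {x}) :=
    omegaLimit_subset_closure_image2 _ _ _ univ_mem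
  rw [hΩ, image2_singleton_right, image_univ] at hsub
  exact dense_iff_closure_eq.2 (univ_subset_iff.1 hsub)

end Homeomorph

section UniformMetric

variable {X : Type*} [MetricSpace X] [CompactSpace X]

theorem lipschitzWith_toContinuousMap : LipschitzWith 1 fun φ : X ≃ₜ X => (φ : C(X, X)) :=
  .of_dist_le_mul fun φ ψ => by
    rw [NNReal.coe_one, one_mul]
    exact le_max_left _ _

theorem continuous_iterate_apply (i : ℕ) :
    Continuous fun p : (X ≃ₜ X) × X => p.1^[i] p.2 := by
  induction i with
  | zero => exact continuous_snd
  | succ i ih =>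
    simp only [Function.iterate_succ_apply']
    exact continuous_eval.comp
      ((lipschitzWith_toContinuousMap.continuous.comp continuous_fst).prodMk ih)

theorem isOpen_setOf_forall_exists_iterate_dist_lt (M : ℕ) (ε : ℝ) :
    IsOpen {ψ : X ≃ₜ X | ∀ x z : X, ∃ i ≤ M, dist z (ψ^[i] x) < ε} := by
  have hclosed :
      IsClosed {q : (X ≃ₜ X) × X × X | ∀ i ≤ M, ε ≤ dist q.2.2 (q.1^[i] q.2.1)} := by
    simp only [ofPred_forall]
    exact isClosed_iInter fun i => isClosed_iInter fun _ => isClosed_le continuous_const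
      (continuous_snd.snd.dist ((continuous_iterate_apply i).comp
        (continuous_fst.prodMk continuous_snd.fst)))
  rw [← isClosed_compl_iff]
  convert isClosedMap_fst_of_compactSpace _ hclosed using 1
  ext ψ
  simp

theorem exists_forall_exists_iterate_dist_lt {f : X → X} (hf : Continuous f)
    (hdense : ∀ x, DenseRange fun n : ℕ => f^[n] x) {ε : ℝ} (hε : 0 < ε) :
    ∃ M, ∀ x z : X, ∃ i ≤ M, dist z (f^[i] x) < ε := by
  let U : ℕ → Set (X × X) := fun M => {p | ∃ i ≤ M, dist p.2 (f^[i] p.1) < ε}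
  have hUo (M : ℕ) : IsOpen (U M) := by
    simp only [U, ofPred_exists, ofPred_and]
    exact isOpen_iUnion fun i => isOpen_const.inter
      (isOpen_lt (continuous_snd.dist ((hf.iterate i).comp continuous_fst)) continuous_const)
  have hUmono : Monotone U := fun m n hmn p ⟨i, hi, hp⟩ => ⟨i, hi.trans hmn, hp⟩
  have hcover : univ ⊆ ⋃ M, U M := fun p _ => by
    obtain ⟨n, hn⟩ := (hdense p.1).exists_dist_lt p.2 hε
    exact mem_iUnion.2 ⟨n, n, le_rfl, hn⟩
  obtain ⟨M, hM⟩ := isCompact_univ.elim_directed_cover U hUo hcover hUmono.directed_le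
  exact ⟨M, fun x z => hM (mem_univ (x, z))⟩

theorem setOf_dense_orbit_eq_iInter_iUnion :
    {ψ : X ≃ₜ X | ∀ x : X, Dense {y | ∃ n : ℕ, y = ψ^[n] x ∨ y = ψ.symm^[n] x}} =
      ⋂ (ε : ℚ) (_ : 0 < ε), ⋃ M : ℕ,
        {ψ : X ≃ₜ X | ∀ x z : X, ∃ i ≤ M, dist z (ψ^[i] x) < (ε : ℝ)} := by
  ext ψ
  simp only [mem_ofPred_eq, mem_iInter, mem_iUnion]
  constructor
  · intro hψ ε hε
    exact exists_forall_exists_iterate_dist_lt ψ.continuous (ψ.denseRange_iterate hψ)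
      (by exact_mod_cast hε)
  · intro hψ x
    refine Metric.dense_iff.2 fun z r hr => ?_
    obtain ⟨q, hq, hqr⟩ := exists_rat_btwn hr
    obtain ⟨M, hM⟩ := hψ q (by exact_mod_cast hq)
    obtain ⟨i, -, hi⟩ := hM x z
    exact ⟨ψ^[i] x, by rw [Metric.mem_ball, dist_comm]; exact hi.trans hqr, i, Or.inl rfl⟩

end UniformMetric

/-- The set of minimal homeomorphisms of a compact metric space `X` is a `G_δ`
subset of `Homeo(X)` with the uniform metric.  Each set
`U^min_{M,ε} = {ψ | ∀ x, {x, ψ x, …, ψ^M x} is ε-dense}` is open, and the set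
of minimal homeomorphisms equals `⋂_{ε ∈ ℚ⁺} ⋃_{M ∈ ℕ} U^min_{M,ε}`. -/
theorem stmt_2 {X : Type*} [MetricSpace X] [CompactSpace X] :
    (∀ (M : ℕ) (ε : ℝ), 0 < ε →
      IsOpen {ψ : X ≃ₜ X | ∀ x z : X, ∃ i ≤ M, dist z ((⇑ψ)^[i] x) < ε}) ∧
    ({ψ : X ≃ₜ X | ∀ x : X,
        Dense {y | ∃ n : ℕ, y = (⇑ψ)^[n] x ∨ y = (⇑ψ.symm)^[n] x}} =
      ⋂ (ε : ℚ) (_ : 0 < ε), ⋃ M : ℕ,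
        {ψ : X ≃ₜ X | ∀ x z : X, ∃ i ≤ M, dist z ((⇑ψ)^[i] x) < (ε : ℝ)}) ∧
    IsGδ {ψ : X ≃ₜ X | ∀ x : X,
        Dense {y | ∃ n : ℕ, y = (⇑ψ)^[n] x ∨ y = (⇑ψ.symm)^[n] x}} := by
  refine ⟨fun M ε _ => isOpen_setOf_forall_exists_iterate_dist_lt M ε,
    setOf_dense_orbit_eq_iInter_iUnion, ?_⟩
  rw [setOf_dense_orbit_eq_iInter_iUnion]
  exact .biInter (to_countable _) fun ε _ =>
    (isOpen_iUnion fun M => isOpen_setOf_forall_exists_iterate_dist_lt M ε).isGδ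
end

section
/- The set of uniquely ergodic homeomorphisms of a compact metric space X is a G_δ subset of Homeo(X) with the uniform metric. -/
open Filter Finset

open MeasureTheory

set_option linter.unusedSectionVars false
set_option maxHeartbeats 1000000
open Function TopologicalSpace
open scoped BoundedContinuousFunction Topology NNReal ENNReal

namespace UE

variable {X : Type*} [MetricSpace X] [CompactSpace X]

/-- Birkhoff average as a bounded continuous function. -/
noncomputable def avgB (ψ : X ≃ₜ X) (f : X →ᵇ ℝ) (n : ℕ) : X →ᵇ ℝ :=
  (((n : ℝ) + 1))⁻¹ • ∑ i ∈ range (n + 1), f.compContinuous ⟨(⇑ψ)^[i], ψ.continuous.iterate i⟩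

lemma avgB_apply (ψ : X ≃ₜ X) (f : X →ᵇ ℝ) (n : ℕ) (x : X) :
    avgB ψ f n x = ((n : ℝ) + 1)⁻¹ * ∑ i ∈ range (n + 1), f ((⇑ψ)^[i] x) := by
  simp [avgB]

section Meas
variable [MeasurableSpace X] [BorelSpace X]

/-- Empirical measure along an orbit segment of length `n+1` started at `x n`. -/
noncomputable def emp (ψ : X ≃ₜ X) (x : ℕ → X) (n : ℕ) : Measure X :=
  (((n : ℝ≥0∞) + 1))⁻¹ • ∑ i ∈ range (n + 1), Measure.dirac ((⇑ψ)^[i] (x n))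

instance (ψ : X ≃ₜ X) (x : ℕ → X) (n : ℕ) : IsProbabilityMeasure (emp ψ x n) := by
  constructor
  simp only [emp, Measure.smul_apply, Measure.finset_sum_apply, measure_univ, smul_eq_mul]
  rw [Finset.sum_const, card_range, nsmul_eq_mul, mul_one]
  push_cast
  have h0 : ((n : ℝ≥0∞) + 1) ≠ 0 := by
    simp
  have ht : ((n : ℝ≥0∞) + 1) ≠ ⊤ := by
    exact ENNReal.add_ne_top.mpr ⟨ENNReal.natCast_ne_top n, ENNReal.one_ne_top⟩
  exact ENNReal.inv_mul_cancel h0 ht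

lemma integral_emp (ψ : X ≃ₜ X) (x : ℕ → X) (n : ℕ) (f : X →ᵇ ℝ) :
    ∫ a, f a ∂(emp ψ x n) = avgB ψ f n (x n) := by
  rw [emp, integral_smul_measure, integral_finset_sum_measure
    (fun i _ => f.integrable _), avgB_apply]
  rw [ENNReal.toReal_inv]
  congr 1
  simp

end Meas

section Lam
variable [MeasurableSpace X] [BorelSpace X]
variable (ψ : X ≃ₜ X) (x : ℕ → X) (U : Ultrafilter ℕ)

lemma abs_integral_emp_le (f : X →ᵇ ℝ) (n : ℕ) : |∫ a, f a ∂(emp ψ x n)| ≤ ‖f‖ := by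
  calc |∫ a, f a ∂(emp ψ x n)| ≤ ‖f‖ * ((emp ψ x n) Set.univ).toReal :=
        norm_integral_le_of_norm_le_const (Eventually.of_forall fun a => f.norm_coe_le_norm a)
  _ = ‖f‖ := by simp

lemma exists_lam (f : X →ᵇ ℝ) :
    ∃ l, Tendsto (fun n => ∫ a, f a ∂(emp ψ x n)) (↑U) (𝓝 l) := by
  have hmem : ∀ n, (∫ a, f a ∂(emp ψ x n)) ∈ Set.Icc (-‖f‖) ‖f‖ := fun n =>
    abs_le.mp (abs_integral_emp_le ψ x f n)
  have hle : (↑(U.map fun n => ∫ a, f a ∂(emp ψ x n)) : Filter ℝ) ≤ 𝓟 (Set.Icc (-‖f‖) ‖f‖) := by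
    rw [Ultrafilter.coe_map]
    exact Filter.tendsto_principal.mpr (Eventually.of_forall hmem)
  obtain ⟨l, -, hl⟩ := isCompact_Icc.ultrafilter_le_nhds
      (U.map fun n => ∫ a, f a ∂(emp ψ x n)) hle
  exact ⟨l, by rwa [Ultrafilter.coe_map] at hl⟩

/-- The limit functional along the ultrafilter `U` of integrals against empirical measures. -/
noncomputable def lam (f : X →ᵇ ℝ) : ℝ := (exists_lam ψ x U f).choose

lemma lam_spec (f : X →ᵇ ℝ) :
    Tendsto (fun n => ∫ a, f a ∂(emp ψ x n)) (↑U) (𝓝 (lam ψ x U f)) :=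
  (exists_lam ψ x U f).choose_spec

lemma lam_add (f g : X →ᵇ ℝ) : lam ψ x U (f + g) = lam ψ x U f + lam ψ x U g := by
  refine tendsto_nhds_unique (lam_spec ψ x U (f + g)) ?_
  have h := (lam_spec ψ x U f).add (lam_spec ψ x U g)
  refine h.congr fun n => ?_
  rw [← integral_add (f.integrable _) (g.integrable _)]
  rfl

lemma lam_smul (c : ℝ) (f : X →ᵇ ℝ) : lam ψ x U (c • f) = c * lam ψ x U f := by
  refine tendsto_nhds_unique (lam_spec ψ x U (c • f)) ?_
  have h := (lam_spec ψ x U f).const_mul c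
  refine h.congr fun n => ?_
  rw [← integral_const_mul]
  rfl

lemma lam_const (c : ℝ) : lam ψ x U (BoundedContinuousFunction.const X c) = c := by
  refine tendsto_nhds_unique (lam_spec ψ x U _) ?_
  have : ∀ n, ∫ a, (BoundedContinuousFunction.const X c) a ∂(emp ψ x n) = c := by
    intro n; simp
  simpa [this] using (tendsto_const_nhds : Tendsto (fun _ : ℕ => c) (↑U) (𝓝 c))

lemma lam_mono {f g : X →ᵇ ℝ} (h : ∀ a, f a ≤ g a) : lam ψ x U f ≤ lam ψ x U g :=
  le_of_tendsto_of_tendsto' (lam_spec ψ x U f) (lam_spec ψ x U g) fun n =>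
    integral_mono (f.integrable _) (g.integrable _) h

lemma lam_nonneg {f : X →ᵇ ℝ} (h : ∀ a, 0 ≤ f a) : 0 ≤ lam ψ x U f := by
  have := lam_mono ψ x U (f := BoundedContinuousFunction.const X 0) (g := f) (by simpa using h)
  rwa [lam_const] at this

lemma integral_emp_comp_sub (f : X →ᵇ ℝ) (n : ℕ) :
    ∫ a, (f.compContinuous ⟨⇑ψ, ψ.continuous⟩) a ∂(emp ψ x n) - ∫ a, f a ∂(emp ψ x n)
      = ((n : ℝ) + 1)⁻¹ * (f ((⇑ψ)^[n + 1] (x n)) - f (x n)) := by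
  rw [integral_emp, integral_emp, avgB_apply, avgB_apply, ← mul_sub, ← Finset.sum_sub_distrib]
  congr 1
  have hterm : ∀ i, (f.compContinuous ⟨⇑ψ, ψ.continuous⟩) ((⇑ψ)^[i] (x n))
      = f ((⇑ψ)^[i + 1] (x n)) := fun i => by
    simp [Function.iterate_succ_apply']
  calc ∑ i ∈ range (n + 1),
        ((f.compContinuous ⟨⇑ψ, ψ.continuous⟩) ((⇑ψ)^[i] (x n)) - f ((⇑ψ)^[i] (x n)))
      = ∑ i ∈ range (n + 1), (f ((⇑ψ)^[i + 1] (x n)) - f ((⇑ψ)^[i] (x n))) := by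
        refine Finset.sum_congr rfl fun i _ => by rw [hterm]
    _ = f ((⇑ψ)^[n + 1] (x n)) - f (x n) := by
        rw [Finset.sum_range_sub (fun i => f ((⇑ψ)^[i] (x n)))]
        simp

lemma lam_comp (hU : (↑U : Filter ℕ) ≤ atTop) (f : X →ᵇ ℝ) :
    lam ψ x U (f.compContinuous ⟨⇑ψ, ψ.continuous⟩) = lam ψ x U f := by
  set d : ℕ → ℝ := fun n =>
    ∫ a, (f.compContinuous ⟨⇑ψ, ψ.continuous⟩) a ∂(emp ψ x n) - ∫ a, f a ∂(emp ψ x n) with hd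
  have hd0 : Tendsto d atTop (𝓝 0) := by
    have htend : Tendsto (fun n : ℕ => ((n : ℝ) + 1)⁻¹ * (2 * ‖f‖)) atTop (𝓝 0) := by
      have h1 : Tendsto (fun n : ℕ => ((n : ℝ) + 1)⁻¹) atTop (𝓝 0) := by
        simpa [one_div] using tendsto_one_div_add_atTop_nhds_zero_nat (𝕜 := ℝ)
      simpa using h1.mul_const (2 * ‖f‖)
    refine squeeze_zero_norm (fun n => ?_) htend
    · rw [hd]
      simp only [integral_emp_comp_sub]
      rw [norm_mul, norm_inv]
      gcongr
      · simp [abs_of_nonneg (by positivity : (0:ℝ) ≤ (n:ℝ) + 1)]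
      · calc ‖f ((⇑ψ)^[n + 1] (x n)) - f (x n)‖
            ≤ ‖f ((⇑ψ)^[n + 1] (x n))‖ + ‖f (x n)‖ := norm_sub_le _ _
          _ ≤ ‖f‖ + ‖f‖ := add_le_add (f.norm_coe_le_norm _) (f.norm_coe_le_norm _)
          _ = 2 * ‖f‖ := by ring
  refine tendsto_nhds_unique (lam_spec ψ x U _) ?_
  have h2 := (lam_spec ψ x U f).add (hd0.mono_left hU)
  rw [add_zero] at h2
  refine h2.congr fun n => ?_
  rw [hd]; ring

end Lam

section Cont
variable [MeasurableSpace X] [BorelSpace X]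
variable (ψ : X ≃ₜ X) (x : ℕ → X) (U : Ultrafilter ℕ)

/-- Admissible competitors for the Riesz content of a set `K`. -/
def adm (K : Set X) : Set (X →ᵇ ℝ) := {g | (∀ a, 0 ≤ g a) ∧ ∀ a ∈ K, 1 ≤ g a}

lemma one_mem_adm (K : Set X) : (BoundedContinuousFunction.const X (1:ℝ)) ∈ adm K :=
  ⟨fun _ => zero_le_one, fun _ _ => le_refl _⟩

/-- The Riesz content associated to `lam`. -/
noncomputable def lamK (K : Set X) : ℝ := sInf (lam ψ x U '' adm K)

lemma lamK_bddBelow (K : Set X) : BddBelow (lam ψ x U '' adm K) :=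
  ⟨0, by rintro r ⟨g, hg, rfl⟩; exact lam_nonneg ψ x U hg.1⟩

lemma lamK_nonempty (K : Set X) : (lam ψ x U '' adm K).Nonempty :=
  ⟨_, Set.mem_image_of_mem _ (one_mem_adm K)⟩

lemma lamK_nonneg (K : Set X) : 0 ≤ lamK ψ x U K :=
  le_csInf (lamK_nonempty ψ x U K) (by rintro r ⟨g, hg, rfl⟩; exact lam_nonneg ψ x U hg.1)

lemma lamK_le {K : Set X} {g : X →ᵇ ℝ} (hg : g ∈ adm K) : lamK ψ x U K ≤ lam ψ x U g :=
  csInf_le (lamK_bddBelow ψ x U K) (Set.mem_image_of_mem _ hg)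

lemma lamK_mono {K K' : Set X} (h : K ⊆ K') : lamK ψ x U K ≤ lamK ψ x U K' :=
  csInf_le_csInf (lamK_bddBelow ψ x U K) (lamK_nonempty ψ x U K')
    (Set.image_mono fun g hg => ⟨hg.1, fun a ha => hg.2 a (h ha)⟩)

lemma lamK_univ : lamK ψ x U Set.univ = 1 := by
  refine le_antisymm ?_ ?_
  · have := lamK_le ψ x U (one_mem_adm Set.univ)
    rwa [lam_const] at this
  · refine le_csInf (lamK_nonempty ψ x U _) ?_
    rintro r ⟨g, hg, rfl⟩
    have := lam_mono ψ x U (f := BoundedContinuousFunction.const X 1) (g := g)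
      (fun a => by simpa using hg.2 a trivial)
    rwa [lam_const] at this

lemma lamK_union_le (K₁ K₂ : Set X) :
    lamK ψ x U (K₁ ∪ K₂) ≤ lamK ψ x U K₁ + lamK ψ x U K₂ := by
  refine le_of_forall_pos_le_add fun ε hε => ?_
  obtain ⟨r₁, ⟨g₁, hg₁, rfl⟩, hr₁⟩ := exists_lt_of_csInf_lt (lamK_nonempty ψ x U K₁)
    (lt_add_of_pos_right (lamK ψ x U K₁) (by positivity : (0:ℝ) < ε/2))
  obtain ⟨r₂, ⟨g₂, hg₂, rfl⟩, hr₂⟩ := exists_lt_of_csInf_lt (lamK_nonempty ψ x U K₂)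
    (lt_add_of_pos_right (lamK ψ x U K₂) (by positivity : (0:ℝ) < ε/2))
  have hmem : g₁ + g₂ ∈ adm (K₁ ∪ K₂) := by
    refine ⟨fun a => add_nonneg (hg₁.1 a) (hg₂.1 a), fun a ha => ?_⟩
    rcases ha with ha | ha
    · calc (1:ℝ) ≤ g₁ a := hg₁.2 a ha
        _ ≤ g₁ a + g₂ a := le_add_of_nonneg_right (hg₂.1 a)
        _ = (g₁ + g₂) a := rfl
    · calc (1:ℝ) ≤ g₂ a := hg₂.2 a ha
        _ ≤ g₁ a + g₂ a := le_add_of_nonneg_left (hg₁.1 a)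
        _ = (g₁ + g₂) a := rfl
  calc lamK ψ x U (K₁ ∪ K₂) ≤ lam ψ x U (g₁ + g₂) := lamK_le ψ x U hmem
    _ = lam ψ x U g₁ + lam ψ x U g₂ := lam_add ψ x U g₁ g₂
    _ ≤ (lamK ψ x U K₁ + ε/2) + (lamK ψ x U K₂ + ε/2) := add_le_add hr₁.le hr₂.le
    _ = lamK ψ x U K₁ + lamK ψ x U K₂ + ε := by ring

lemma lamK_union_disjoint {K₁ K₂ : Set X} (hd : Disjoint K₁ K₂)
    (h₁ : IsClosed K₁) (h₂ : IsClosed K₂) :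
    lamK ψ x U (K₁ ∪ K₂) = lamK ψ x U K₁ + lamK ψ x U K₂ := by
  refine le_antisymm (lamK_union_le ψ x U K₁ K₂) ?_
  obtain ⟨h, h0, h1, hIcc⟩ := exists_bounded_zero_one_of_closed h₁ h₂ hd
  refine le_csInf (lamK_nonempty ψ x U _) ?_
  rintro r ⟨g, hg, rfl⟩
  have hmem₁ : g * (1 - h) ∈ adm K₁ := by
    refine ⟨fun a => mul_nonneg (hg.1 a) (by simpa using (hIcc a).2), fun a ha => ?_⟩
    have : h a = 0 := h0 ha
    have : (g * (1 - h)) a = g a := by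
      simp [this]
    rw [this]
    exact hg.2 a (Or.inl ha)
  have hmem₂ : g * h ∈ adm K₂ := by
    refine ⟨fun a => mul_nonneg (hg.1 a) (hIcc a).1, fun a ha => ?_⟩
    have : (g * h) a = g a := by simp [h1 ha]
    rw [this]
    exact hg.2 a (Or.inr ha)
  have hsum : g * (1 - h) + g * h = g := by
    ext a; simp; ring
  calc lamK ψ x U K₁ + lamK ψ x U K₂
      ≤ lam ψ x U (g * (1 - h)) + lam ψ x U (g * h) :=
        add_le_add (lamK_le ψ x U hmem₁) (lamK_le ψ x U hmem₂)
    _ = lam ψ x U (g * (1 - h) + g * h) := (lam_add ψ x U _ _).symm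
    _ = lam ψ x U g := by rw [hsum]

lemma lam_image_adm_eq (hU : (↑U : Filter ℕ) ≤ atTop) (K : Set X) :
    lam ψ x U '' adm (⇑ψ '' K) = lam ψ x U '' adm K := by
  ext r
  constructor
  · rintro ⟨g, hg, rfl⟩
    refine ⟨g.compContinuous ⟨⇑ψ, ψ.continuous⟩, ⟨fun a => hg.1 _, fun a ha => hg.2 _ ⟨a, ha, rfl⟩⟩,
      (lam_comp ψ x U hU g)⟩
  · rintro ⟨g, hg, rfl⟩
    refine ⟨g.compContinuous ⟨⇑ψ.symm, ψ.symm.continuous⟩, ⟨fun a => hg.1 _, ?_⟩, ?_⟩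
    · rintro a ⟨b, hb, rfl⟩
      simpa using hg.2 b hb
    · have hcomp : (g.compContinuous ⟨⇑ψ.symm, ψ.symm.continuous⟩).compContinuous
          ⟨⇑ψ, ψ.continuous⟩ = g := by
        ext a; simp
      rw [← lam_comp ψ x U hU (g.compContinuous ⟨⇑ψ.symm, ψ.symm.continuous⟩), hcomp]

lemma lamK_image (hU : (↑U : Filter ℕ) ≤ atTop) (K : Set X) :
    lamK ψ x U (⇑ψ '' K) = lamK ψ x U K := by
  rw [lamK, lam_image_adm_eq ψ x U hU K, lamK]

/-- The content built from `lam`. -/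
noncomputable def cont : Content X where
  toFun := fun K => (lamK ψ x U K).toNNReal
  mono' := fun K₁ K₂ h => Real.toNNReal_mono (lamK_mono ψ x U h)
  sup_disjoint' := by
    intro K₁ K₂ hd h₁ h₂
    have : lamK ψ x U ((K₁ ⊔ K₂ : Compacts X) : Set X) = lamK ψ x U K₁ + lamK ψ x U K₂ := by
      rw [Compacts.coe_sup]
      exact lamK_union_disjoint ψ x U hd h₁ h₂
    rw [this, Real.toNNReal_add (lamK_nonneg ψ x U _) (lamK_nonneg ψ x U _)]
  sup_le' := by
    intro K₁ K₂
    rw [← Real.toNNReal_add (lamK_nonneg ψ x U _) (lamK_nonneg ψ x U _)]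
    refine Real.toNNReal_mono ?_
    rw [Compacts.coe_sup]
    exact lamK_union_le ψ x U K₁ K₂

/-- The invariant measure. -/
noncomputable def mu : Measure X := (cont ψ x U).measure

lemma cont_map_eq (hU : (↑U : Filter ℕ) ≤ atTop) :
    ∀ ⦃K : Compacts X⦄, cont ψ x U (K.map ⇑ψ ψ.continuous) = cont ψ x U K := by
  intro K
  simp only [Content.mk_apply, cont]
  norm_cast
  rw [Compacts.coe_map]
  rw [lamK_image ψ x U hU K]

lemma mu_map (hU : (↑U : Filter ℕ) ≤ atTop) : Measure.map ⇑ψ (mu ψ x U) = mu ψ x U := by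
  refine Measure.ext fun s hs => ?_
  rw [Measure.map_apply ψ.continuous.measurable hs, mu, Content.measure_apply _ hs,
    Content.measure_apply _ (hs.preimage ψ.continuous.measurable),
    (cont ψ x U).outerMeasure_preimage ψ (cont_map_eq ψ x U hU) s]

lemma mu_preserving (hU : (↑U : Filter ℕ) ≤ atTop) : MeasurePreserving ⇑ψ (mu ψ x U) (mu ψ x U) :=
  ⟨ψ.continuous.measurable, mu_map ψ x U hU⟩

instance : IsProbabilityMeasure (mu ψ x U) := by
  constructor
  rw [mu, Content.measure_apply _ MeasurableSet.univ,
    (cont ψ x U).outerMeasure_of_isOpen Set.univ isOpen_univ,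
    Content.innerContent_of_isCompact (cont ψ x U) isCompact_univ isOpen_univ]
  have : cont ψ x U ⟨Set.univ, isCompact_univ⟩ = ((lamK ψ x U Set.univ).toNNReal : ℝ≥0∞) := rfl
  rw [this, lamK_univ]
  simp

end Cont

section Repr
variable [MeasurableSpace X] [BorelSpace X]
variable (ψ : X ≃ₜ X) (x : ℕ → X) (U : Ultrafilter ℕ)

lemma lam_zero : lam ψ x U 0 = 0 := by
  refine tendsto_nhds_unique (lam_spec ψ x U 0) ?_
  simpa using (tendsto_const_nhds : Tendsto (fun _ : ℕ => (0:ℝ)) (↑U) (𝓝 0))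

lemma lam_sum {ι : Type*} (s : Finset ι) (g : ι → (X →ᵇ ℝ)) :
    lam ψ x U (∑ i ∈ s, g i) = ∑ i ∈ s, lam ψ x U (g i) := by
  classical
  induction s using Finset.induction_on with
  | empty => simpa using lam_zero ψ x U
  | insert _ _ hnot ih =>
      rw [Finset.sum_insert hnot, Finset.sum_insert hnot, lam_add, ih]

/-- `min` of a bounded continuous function and a constant. -/
noncomputable def mint (f : X →ᵇ ℝ) (c : ℝ) : X →ᵇ ℝ :=
  BoundedContinuousFunction.mkOfCompact ⟨fun a => min (f a) c, f.continuous.min continuous_const⟩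

@[simp] lemma mint_apply (f : X →ᵇ ℝ) (c : ℝ) (a : X) : mint f c a = min (f a) c := rfl

lemma lam_le_integral_mu (f : X →ᵇ ℝ) (hf0 : ∀ a, 0 ≤ f a) :
    lam ψ x U f ≤ ∫ a, f a ∂(mu ψ x U) := by
  have key : ∀ N : ℕ, 1 ≤ N →
      lam ψ x U f ≤ ∫ a, f a ∂(mu ψ x U) + 2 * ((‖f‖ + 1) / N) := by
    intro N hN
    have hNpos : (0:ℝ) < N := by exact_mod_cast Nat.lt_of_lt_of_le Nat.zero_lt_one hN
    set δ : ℝ := (‖f‖ + 1) / N with hδdef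
    have hδ : 0 < δ := div_pos (by positivity) hNpos
    have hNδ : (N:ℝ) * δ = ‖f‖ + 1 := by
      rw [hδdef]; field_simp
    set fd : ℕ → (X →ᵇ ℝ) := fun i => mint f (((i:ℝ) + 1) * δ) - mint f ((i:ℝ) * δ) with hfd
    have hfd_apply : ∀ i a, fd i a = min (f a) (((i:ℝ) + 1) * δ) - min (f a) ((i:ℝ) * δ) :=
      fun i a => rfl
    have hfa_le : ∀ a, f a ≤ ‖f‖ := fun a => (le_abs_self _).trans (f.norm_coe_le_norm a)
    have hsplit : f = ∑ i ∈ range N, fd i := by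
      ext a
      rw [BoundedContinuousFunction.coe_sum, Finset.sum_apply]
      have e1 : ∀ i ∈ range N, fd i a
          = (fun j : ℕ => min (f a) ((j:ℝ) * δ)) (i+1) - (fun j : ℕ => min (f a) ((j:ℝ) * δ)) i := by
        intro i _
        rw [hfd_apply]
        push_cast
        rfl
      rw [Finset.sum_congr rfl e1, Finset.sum_range_sub (fun j : ℕ => min (f a) ((j:ℝ) * δ)) N]
      simp only [Nat.cast_zero, zero_mul]
      rw [min_eq_right (hf0 a), min_eq_left (by nlinarith [hfa_le a])]
      ring
    -- the compact and open level sets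
    have hCc : ∀ i : ℕ, IsCompact {a : X | (i:ℝ) * δ ≤ f a} := fun i =>
      (isClosed_le continuous_const f.continuous).isCompact
    have hWopen : ∀ i : ℕ, IsOpen {a : X | ((i:ℝ) - 1/2) * δ < f a} := fun i =>
      (isOpen_lt continuous_const f.continuous)
    -- Step B : lam (fd i) ≤ δ * lamK (C i)
    have hB : ∀ i : ℕ, lam ψ x U (fd i) ≤ δ * lamK ψ x U {a : X | (i:ℝ) * δ ≤ f a} := by
      intro i
      have hg : ∀ g ∈ adm {a : X | (i:ℝ) * δ ≤ f a}, lam ψ x U (fd i) ≤ δ * lam ψ x U g := by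
        intro g hg
        have hpt : ∀ a, fd i a ≤ (δ • g) a := by
          intro a
          rw [hfd_apply]
          simp only [BoundedContinuousFunction.coe_smul, Pi.smul_apply, smul_eq_mul]
          rcases le_or_gt ((i:ℝ) * δ) (f a) with hin | hout
          · have h1 : min (f a) ((i:ℝ) * δ) = (i:ℝ) * δ := min_eq_right hin
            have h2 : min (f a) (((i:ℝ) + 1) * δ) ≤ ((i:ℝ) + 1) * δ := min_le_right _ _
            have h3 : (1:ℝ) ≤ g a := hg.2 a hin
            nlinarith
          · have h1 : min (f a) ((i:ℝ) * δ) = f a := min_eq_left hout.le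
            have h2 : min (f a) (((i:ℝ) + 1) * δ) = f a := min_eq_left (by nlinarith)
            have := mul_nonneg hδ.le (hg.1 a)
            rw [h1, h2]
            linarith
        have := lam_mono ψ x U hpt
        rwa [lam_smul] at this
      have : δ⁻¹ * lam ψ x U (fd i) ≤ lamK ψ x U {a : X | (i:ℝ) * δ ≤ f a} := by
        refine le_csInf (lamK_nonempty ψ x U _) ?_
        rintro r ⟨g, hgadm, rfl⟩
        rw [inv_mul_le_iff₀ hδ]
        exact hg g hgadm
      calc lam ψ x U (fd i) = δ * (δ⁻¹ * lam ψ x U (fd i)) := by field_simp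
        _ ≤ δ * lamK ψ x U {a : X | (i:ℝ) * δ ≤ f a} :=
            mul_le_mul_of_nonneg_left this hδ.le
    -- Step C : lamK (C i) ≤ (mu (W i)).toReal
    have hC : ∀ i : ℕ, lamK ψ x U {a : X | (i:ℝ) * δ ≤ f a}
        ≤ (mu ψ x U {a : X | ((i:ℝ) - 1/2) * δ < f a}).toReal := by
      intro i
      have hsub : {a : X | (i:ℝ) * δ ≤ f a} ⊆ {a : X | ((i:ℝ) - 1/2) * δ < f a} := by
        intro a ha
        simp only [Set.mem_setOf_eq] at ha ⊢
        nlinarith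
      have h1 : ((cont ψ x U) ⟨_, hCc i⟩ : ℝ≥0∞) ≤ mu ψ x U {a : X | ((i:ℝ) - 1/2) * δ < f a} := by
        rw [mu, Content.measure_apply _ (hWopen i).measurableSet,
          (cont ψ x U).outerMeasure_of_isOpen _ (hWopen i)]
        exact (cont ψ x U).le_innerContent _ _ hsub
      have h2 := ENNReal.toReal_mono (measure_ne_top _ _) h1
      have h3 : ((cont ψ x U) ⟨_, hCc i⟩ : ℝ≥0∞).toReal = lamK ψ x U {a : X | (i:ℝ) * δ ≤ f a} := by
        rw [show ((cont ψ x U) ⟨_, hCc i⟩ : ℝ≥0∞)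
            = ((lamK ψ x U {a : X | (i:ℝ) * δ ≤ f a}).toNNReal : ℝ≥0∞) from rfl,
          ENNReal.coe_toReal, Real.coe_toNNReal _ (lamK_nonneg ψ x U _)]
      rwa [h3] at h2
    -- Step D : sum of δ * measures bounded by the integral
    have hint : ∀ i ∈ range N,
        Integrable (({a : X | ((i:ℝ) - 1/2) * δ < f a}).indicator fun _ => δ) (mu ψ x U) :=
      fun i _ => (integrable_const δ).indicator (hWopen i).measurableSet
    have hD : ∑ i ∈ range N, δ * (mu ψ x U {a : X | ((i:ℝ) - 1/2) * δ < f a}).toReal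
        ≤ ∫ a, f a ∂(mu ψ x U) + 2 * δ := by
      have e2 : ∀ i ∈ range N, δ * (mu ψ x U {a : X | ((i:ℝ) - 1/2) * δ < f a}).toReal
          = ∫ a, ({a : X | ((i:ℝ) - 1/2) * δ < f a}).indicator (fun _ => δ) a ∂(mu ψ x U) := by
        intro i _
        rw [integral_indicator_const _ (hWopen i).measurableSet, smul_eq_mul, mul_comm]
        rfl
      rw [Finset.sum_congr rfl e2, ← integral_finset_sum _ hint]
      have hptw : ∀ a, ∑ i ∈ range N,
          ({a : X | ((i:ℝ) - 1/2) * δ < f a}).indicator (fun _ => δ) a ≤ f a + 2 * δ := by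
        intro a
        have hterm : ∀ i ∈ range N,
            ({a : X | ((i:ℝ) - 1/2) * δ < f a}).indicator (fun _ => δ) a
            ≤ (fun j : ℕ => min (f a + δ) (((j:ℝ) - 1/2) * δ)) (i+1)
              - (fun j : ℕ => min (f a + δ) (((j:ℝ) - 1/2) * δ)) i := by
          intro i _
          simp only
          by_cases hmem : a ∈ {a : X | ((i:ℝ) - 1/2) * δ < f a}
          · rw [Set.indicator_of_mem hmem]
            simp only [Set.mem_setOf_eq] at hmem
            have h1 : min (f a + δ) (((i:ℝ) + 1 - 1/2) * δ) = ((i:ℝ) + 1 - 1/2) * δ :=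
              min_eq_right (by nlinarith)
            have h2 : min (f a + δ) (((i:ℝ) - 1/2) * δ) = ((i:ℝ) - 1/2) * δ :=
              min_eq_right (by nlinarith)
            push_cast
            rw [h1, h2]
            have : ((i:ℝ) + 1 - 1/2) * δ - ((i:ℝ) - 1/2) * δ = δ := by ring
            linarith
          · rw [Set.indicator_of_notMem hmem]
            push_cast
            have hmono : (f a + δ) ⊓ (((i:ℝ) - 1/2) * δ) ≤ (f a + δ) ⊓ (((i:ℝ) + 1 - 1/2) * δ) :=
              min_le_min (le_refl _) (by nlinarith)
            linarith
        calc ∑ i ∈ range N, ({a : X | ((i:ℝ) - 1/2) * δ < f a}).indicator (fun _ => δ) a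
            ≤ ∑ i ∈ range N, ((fun j : ℕ => min (f a + δ) (((j:ℝ) - 1/2) * δ)) (i+1)
              - (fun j : ℕ => min (f a + δ) (((j:ℝ) - 1/2) * δ)) i) :=
              Finset.sum_le_sum hterm
          _ = min (f a + δ) ((((N:ℕ):ℝ) - 1/2) * δ) - min (f a + δ) ((((0:ℕ):ℝ) - 1/2) * δ) := by
              rw [Finset.sum_range_sub (fun j : ℕ => min (f a + δ) (((j:ℝ) - 1/2) * δ)) N]
          _ ≤ f a + 2 * δ := by
              have h1 : min (f a + δ) ((((N:ℕ):ℝ) - 1/2) * δ) ≤ f a + δ := min_le_left _ _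
              have h2 : min (f a + δ) ((((0:ℕ):ℝ) - 1/2) * δ) = (((0:ℕ):ℝ) - 1/2) * δ :=
                min_eq_right (by push_cast; nlinarith [hf0 a])
              rw [h2]
              push_cast
              nlinarith
      calc ∫ a, (∑ i ∈ range N,
              ({a : X | ((i:ℝ) - 1/2) * δ < f a}).indicator (fun _ => δ) a) ∂(mu ψ x U)
          ≤ ∫ a, (f a + 2 * δ) ∂(mu ψ x U) := by
            refine integral_mono (integrable_finset_sum _ hint) ((f.integrable _).add
              (integrable_const _)) ?_
            intro a
            simpa using hptw a
        _ = ∫ a, f a ∂(mu ψ x U) + 2 * δ := by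
            rw [integral_add (f.integrable _) (integrable_const _), integral_const]
            simp
    -- assemble
    calc lam ψ x U f = ∑ i ∈ range N, lam ψ x U (fd i) := by rw [hsplit, lam_sum]
      _ ≤ ∑ i ∈ range N, δ * lamK ψ x U {a : X | (i:ℝ) * δ ≤ f a} :=
          Finset.sum_le_sum fun i _ => hB i
      _ ≤ ∑ i ∈ range N, δ * (mu ψ x U {a : X | ((i:ℝ) - 1/2) * δ < f a}).toReal :=
          Finset.sum_le_sum fun i _ => mul_le_mul_of_nonneg_left (hC i) hδ.le
      _ ≤ ∫ a, f a ∂(mu ψ x U) + 2 * δ := hD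
  refine le_of_forall_pos_le_add fun η hη => ?_
  obtain ⟨N₀, hN₀⟩ := exists_nat_ge (2 * (‖f‖ + 1) / η)
  have hN1 : 1 ≤ N₀ + 1 := Nat.le_add_left 1 N₀
  have := key (N₀ + 1) hN1
  have hle : 2 * ((‖f‖ + 1) / (((N₀ + 1 : ℕ)):ℝ)) ≤ η := by
    have hNpos : (0:ℝ) < (((N₀ + 1 : ℕ)):ℝ) := by positivity
    rw [div_le_iff₀ hη] at hN₀
    have he : 2 * ((‖f‖ + 1) / (((N₀ + 1 : ℕ)):ℝ)) = (2 * (‖f‖ + 1)) / (((N₀ + 1 : ℕ)):ℝ) := by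
      ring
    rw [he, div_le_iff₀ hNpos]
    push_cast
    nlinarith
  linarith

lemma integral_mu_eq_lam (hU : (↑U : Filter ℕ) ≤ atTop) (f : X →ᵇ ℝ) :
    ∫ a, f a ∂(mu ψ x U) = lam ψ x U f := by
  have hnn : ∀ g : X →ᵇ ℝ, (∀ a, 0 ≤ g a) → ∫ a, g a ∂(mu ψ x U) = lam ψ x U g := by
    intro g hg0
    refine le_antisymm ?_ (lam_le_integral_mu ψ x U g hg0)
    -- apply the inequality to ‖g‖ - g
    have hg' : ∀ a, 0 ≤ (BoundedContinuousFunction.const X ‖g‖ - g) a := by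
      intro a
      simp only [BoundedContinuousFunction.coe_sub, Pi.sub_apply,
        BoundedContinuousFunction.const_apply]
      have := (le_abs_self (g a)).trans (g.norm_coe_le_norm a)
      linarith
    have h1 := lam_le_integral_mu ψ x U _ hg'
    have h2 : lam ψ x U (BoundedContinuousFunction.const X ‖g‖ - g)
        = ‖g‖ - lam ψ x U g := by
      have := lam_add ψ x U (BoundedContinuousFunction.const X ‖g‖ - g) g
      rw [sub_add_cancel, lam_const] at this
      linarith
    have h3 : ∫ a, (BoundedContinuousFunction.const X ‖g‖ - g) a ∂(mu ψ x U)
        = ‖g‖ - ∫ a, g a ∂(mu ψ x U) := by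
      have : ∀ a, (BoundedContinuousFunction.const X ‖g‖ - g) a = ‖g‖ - g a := fun a => rfl
      simp only [this]
      rw [integral_sub (integrable_const _) (g.integrable _), integral_const]
      simp
    rw [h2, h3] at h1
    linarith
  have h0 : ∀ a, 0 ≤ (f + BoundedContinuousFunction.const X ‖f‖) a := by
    intro a
    simp only [BoundedContinuousFunction.coe_add, Pi.add_apply,
      BoundedContinuousFunction.const_apply]
    have h := f.norm_coe_le_norm a
    rw [Real.norm_eq_abs] at h
    linarith [(abs_le.mp h).1]
  have := hnn _ h0
  have e1 : ∫ a, (f + BoundedContinuousFunction.const X ‖f‖) a ∂(mu ψ x U)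
      = ∫ a, f a ∂(mu ψ x U) + ‖f‖ := by
    have : ∀ a, (f + BoundedContinuousFunction.const X ‖f‖) a = f a + ‖f‖ := fun a => rfl
    simp only [this]
    rw [integral_add (f.integrable _) (integrable_const _), integral_const]
    simp
  have e2 : lam ψ x U (f + BoundedContinuousFunction.const X ‖f‖)
      = lam ψ x U f + ‖f‖ := by
    rw [lam_add, lam_const]
  rw [e1, e2] at this
  linarith

end Repr

section Invariant
variable [MeasurableSpace X] [BorelSpace X]
variable (ψ : X ≃ₜ X)

lemma integral_iterate {μ : Measure X} (h : MeasurePreserving ⇑ψ μ μ) (f : X →ᵇ ℝ) (i : ℕ) :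
    ∫ a, f ((⇑ψ)^[i] a) ∂μ = ∫ a, f a ∂μ := by
  induction i with
  | zero => simp
  | succ i ih =>
      have : ∀ a : X, f ((⇑ψ)^[i+1] a) = (fun b => f ((⇑ψ)^[i] b)) (ψ a) := by
        intro a
        rw [Function.iterate_succ_apply]
      simp only [this]
      rw [h.integral_comp ψ.measurableEmbedding (fun b => f ((⇑ψ)^[i] b))]
      exact ih

lemma integral_avgB {μ : Measure X} [IsProbabilityMeasure μ] (h : MeasurePreserving ⇑ψ μ μ)
    (f : X →ᵇ ℝ) (n : ℕ) :
    ∫ a, avgB ψ f n a ∂μ = ∫ a, f a ∂μ := by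
  have e : ∀ a, avgB ψ f n a = ((n:ℝ)+1)⁻¹ * ∑ i ∈ range (n+1), f ((⇑ψ)^[i] a) :=
    avgB_apply ψ f n
  simp only [e]
  have hint : ∀ i ∈ range (n+1), Integrable (fun a => f ((⇑ψ)^[i] a)) μ := fun i _ =>
    (f.compContinuous ⟨(⇑ψ)^[i], ψ.continuous.iterate i⟩).integrable μ
  rw [integral_const_mul, integral_finset_sum _ hint]
  have : ∀ i ∈ range (n+1), ∫ a, f ((⇑ψ)^[i] a) ∂μ = ∫ a, f a ∂μ :=
    fun i _ => integral_iterate ψ h f i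
  rw [Finset.sum_congr rfl this, Finset.sum_const, card_range, nsmul_eq_mul]
  push_cast
  rw [← mul_assoc, inv_mul_cancel₀ (by positivity : ((n:ℝ)+1) ≠ 0), one_mul]

/-- If the Birkhoff averages of `f` are nearly constant, then all invariant probability
measures give `f` the same integral. -/
lemma integral_eq_of_osc {μ ν : Measure X} [IsProbabilityMeasure μ] [IsProbabilityMeasure ν]
    (hμ : MeasurePreserving ⇑ψ μ μ) (hν : MeasurePreserving ⇑ψ ν ν) (f : X →ᵇ ℝ)
    (hosc : ∀ ε : ℝ, 0 < ε → ∃ n : ℕ, ∃ c : ℝ, ∀ a, |avgB ψ f n a - c| < ε) :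
    ∫ a, f a ∂μ = ∫ a, f a ∂ν := by
  have habs : ∀ ε : ℝ, 0 < ε → |∫ a, f a ∂μ - ∫ a, f a ∂ν| ≤ 2 * ε := by
    intro ε hε
    obtain ⟨n, c, hnc⟩ := hosc ε hε
    have hb : ∀ (κ : Measure X) (_ : IsProbabilityMeasure κ) (_ : MeasurePreserving ⇑ψ κ κ),
        |∫ a, f a ∂κ - c| ≤ ε := by
      intro κ hκprob hκ
      have e1 : ∫ a, f a ∂κ - c = ∫ a, (avgB ψ f n a - c) ∂κ := by
        rw [integral_sub ((avgB ψ f n).integrable κ) (integrable_const c), integral_const,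
          integral_avgB ψ hκ]
        simp
      rw [e1]
      have := norm_integral_le_of_norm_le_const (μ := κ) (f := fun a => avgB ψ f n a - c)
        (C := ε) (Eventually.of_forall fun a => (hnc a).le)
      simpa using this
    have h1 := hb μ inferInstance hμ
    have h2 := hb ν inferInstance hν
    rw [abs_le] at h1 h2 ⊢
    constructor <;> linarith
  by_contra hne
  have hpos : 0 < |∫ a, f a ∂μ - ∫ a, f a ∂ν| := abs_pos.mpr (sub_ne_zero.mpr hne)
  have := habs (|∫ a, f a ∂μ - ∫ a, f a ∂ν| / 4) (by positivity)
  linarith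

/-- Two probability measures agreeing on a dense family of continuous functions agree on all
bounded continuous functions. -/
lemma integral_eq_of_dense {μ ν : Measure X} [IsProbabilityMeasure μ] [IsProbabilityMeasure ν]
    (s : ℕ → C(X, ℝ)) (hs : DenseRange s)
    (h : ∀ k, ∫ a, s k a ∂μ = ∫ a, s k a ∂ν) (g : X →ᵇ ℝ) :
    ∫ a, g a ∂μ = ∫ a, g a ∂ν := by
  have habs : ∀ ε : ℝ, 0 < ε → |∫ a, g a ∂μ - ∫ a, g a ∂ν| ≤ 2 * ε := by
    intro ε hε
    obtain ⟨k, hk⟩ := Metric.denseRange_iff.mp hs g.toContinuousMap ε hε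
    rw [dist_comm] at hk
    have hbound : ∀ (κ : Measure X) (_ : IsProbabilityMeasure κ),
        |∫ a, g a ∂κ - ∫ a, s k a ∂κ| ≤ ε := by
      intro κ hκprob
      have hint : Integrable (fun a => s k a) κ :=
        (BoundedContinuousFunction.mkOfCompact (s k)).integrable κ
      rw [← integral_sub (g.integrable κ) hint]
      have hpt : ∀ a, ‖g a - s k a‖ ≤ dist (s k) g.toContinuousMap := by
        intro a
        rw [Real.norm_eq_abs, abs_sub_comm, ← Real.dist_eq]
        exact ContinuousMap.dist_apply_le_dist a
      have := norm_integral_le_of_norm_le_const (μ := κ) (f := fun a => g a - s k a)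
        (Eventually.of_forall hpt)
      simp only [Measure.real, measure_univ, ENNReal.toReal_one, mul_one] at this
      calc |∫ a, (g a - s k a) ∂κ| ≤ dist (s k) g.toContinuousMap := by simpa using this
        _ ≤ ε := hk.le
    have h1 := hbound μ inferInstance
    have h2 := hbound ν inferInstance
    have h3 := h k
    rw [abs_le] at h1 h2 ⊢
    constructor <;> linarith
  by_contra hne
  have hpos : 0 < |∫ a, g a ∂μ - ∫ a, g a ∂ν| := abs_pos.mpr (sub_ne_zero.mpr hne)
  have := habs (|∫ a, g a ∂μ - ∫ a, g a ∂ν| / 4) (by positivity)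
  linarith

/-- Probability measures with equal integrals of all bounded continuous functions are equal. -/
lemma measure_ext_of_integral {μ ν : Measure X} [IsProbabilityMeasure μ] [IsProbabilityMeasure ν]
    (h : ∀ g : X →ᵇ ℝ, ∫ a, g a ∂μ = ∫ a, g a ∂ν) : μ = ν := by
  have : (⟨μ, inferInstance⟩ : FiniteMeasure X) = (⟨ν, inferInstance⟩ : FiniteMeasure X) := by
    apply FiniteMeasure.ext_of_forall_lintegral_eq
    intro f
    have hfin1 : ∫⁻ a, (f a : ℝ≥0∞) ∂μ ≠ ⊤ := (f.lintegral_lt_top_of_nnreal μ).ne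
    have hfin2 : ∫⁻ a, (f a : ℝ≥0∞) ∂ν ≠ ⊤ := (f.lintegral_lt_top_of_nnreal ν).ne
    have hR := h (BoundedContinuousFunction.mkOfCompact
      ⟨fun a => (f a : ℝ), NNReal.continuous_coe.comp f.continuous⟩)
    have e1 := f.toReal_lintegral_coe_eq_integral μ
    have e2 := f.toReal_lintegral_coe_eq_integral ν
    refine (ENNReal.toReal_eq_toReal_iff' hfin1 hfin2).mp ?_
    rw [e1, e2]
    exact hR
  exact congrArg FiniteMeasure.toMeasure this

end Invariant

section Top

lemma dist_apply_le_homeo (φ ψ : X ≃ₜ X) (z : X) : dist (φ z) (ψ z) ≤ dist φ ψ := by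
  have h1 : dist (φ z) (ψ z) ≤ dist (⟨⇑φ, φ.continuous⟩ : C(X, X)) ⟨⇑ψ, ψ.continuous⟩ :=
    ContinuousMap.dist_apply_le_dist (f := (⟨⇑φ, φ.continuous⟩ : C(X, X)))
      (g := (⟨⇑ψ, ψ.continuous⟩ : C(X, X))) z
  have h2 : dist φ ψ = max (dist (⟨⇑φ, φ.continuous⟩ : C(X, X)) ⟨⇑ψ, ψ.continuous⟩)
      (dist (⟨⇑φ.symm, φ.symm.continuous⟩ : C(X, X)) ⟨⇑ψ.symm, ψ.symm.continuous⟩) := by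
    rw [show dist φ ψ = dist
        ((⟨⇑φ, φ.continuous⟩ : C(X, X)), (⟨⇑φ.symm, φ.symm.continuous⟩ : C(X, X)))
        ((⟨⇑ψ, ψ.continuous⟩ : C(X, X)), (⟨⇑ψ.symm, ψ.symm.continuous⟩ : C(X, X))) from rfl,
      Prod.dist_eq]
  rw [h2]
  exact h1.trans (le_max_left _ _)

lemma iter_approx (ψ : X ≃ₜ X) (n : ℕ) :
    ∀ γ : ℝ, 0 < γ → ∃ δ : ℝ, 0 < δ ∧ ∀ φ : X ≃ₜ X, dist φ ψ < δ →
      ∀ j ≤ n, ∀ z : X, dist ((⇑φ)^[j] z) ((⇑ψ)^[j] z) < γ := by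
  induction n with
  | zero =>
      intro γ hγ
      refine ⟨γ, hγ, fun φ _ j hj z => ?_⟩
      interval_cases j
      simpa using hγ
  | succ n ih =>
      intro γ hγ
      have hψu : UniformContinuous ⇑ψ := CompactSpace.uniformContinuous_of_continuous ψ.continuous
      obtain ⟨γ', hγ', hγ'imp⟩ := Metric.uniformContinuous_iff.mp hψu (γ/2) (by positivity)
      obtain ⟨δ₁, hδ₁, h1⟩ := ih γ hγ
      obtain ⟨δ₂, hδ₂, h2⟩ := ih γ' hγ'
      refine ⟨min (min δ₁ δ₂) (γ/2), by positivity, fun φ hφ j hj z => ?_⟩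
      rcases Nat.lt_or_ge j (n+1) with hlt | hge
      · exact h1 φ (lt_of_lt_of_le hφ ((min_le_left _ _).trans (min_le_left _ _)))
          j (Nat.lt_succ_iff.mp hlt) z
      · have hj' : j = n + 1 := le_antisymm hj hge
        subst hj'
        rw [Function.iterate_succ_apply', Function.iterate_succ_apply']
        calc dist (φ ((⇑φ)^[n] z)) (ψ ((⇑ψ)^[n] z))
            ≤ dist (φ ((⇑φ)^[n] z)) (ψ ((⇑φ)^[n] z))
              + dist (ψ ((⇑φ)^[n] z)) (ψ ((⇑ψ)^[n] z)) := dist_triangle _ _ _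
          _ < γ/2 + γ/2 := by
              refine add_lt_add_of_le_of_lt ?_ ?_
              · exact (dist_apply_le_homeo φ ψ _).trans
                  (hφ.le.trans ((min_le_right _ _)))
              · exact hγ'imp (h2 φ (lt_of_lt_of_le hφ
                  ((min_le_left _ _).trans (min_le_right _ _))) n (le_refl n) z)
          _ = γ := by ring

lemma avg_approx (ψ : X ≃ₜ X) (f : X →ᵇ ℝ) (n : ℕ) (θ : ℝ) (hθ : 0 < θ) :
    ∃ δ : ℝ, 0 < δ ∧ ∀ φ : X ≃ₜ X, dist φ ψ < δ →
      ∀ a : X, |avgB φ f n a - avgB ψ f n a| ≤ θ := by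
  have hfu : UniformContinuous ⇑f := CompactSpace.uniformContinuous_of_continuous f.continuous
  obtain ⟨γ, hγ, hγimp⟩ := Metric.uniformContinuous_iff.mp hfu θ hθ
  obtain ⟨δ, hδ, hiter⟩ := iter_approx ψ n γ hγ
  refine ⟨δ, hδ, fun φ hφ a => ?_⟩
  rw [avgB_apply, avgB_apply, ← mul_sub, ← Finset.sum_sub_distrib, abs_mul, abs_inv]
  have habs : |(n:ℝ) + 1| = (n:ℝ) + 1 := abs_of_pos (by positivity)
  rw [habs]
  have hbound : |∑ i ∈ range (n+1), (f ((⇑φ)^[i] a) - f ((⇑ψ)^[i] a))|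
      ≤ ∑ i ∈ range (n+1), θ := by
    refine (Finset.abs_sum_le_sum_abs _ _).trans (Finset.sum_le_sum fun i hi => ?_)
    have := hγimp (hiter φ hφ i (Nat.lt_succ_iff.mp (mem_range.mp hi)) a)
    rw [Real.dist_eq] at this
    exact this.le
  rw [Finset.sum_const, card_range, nsmul_eq_mul] at hbound
  calc ((n:ℝ) + 1)⁻¹ * |∑ i ∈ range (n+1), (f ((⇑φ)^[i] a) - f ((⇑ψ)^[i] a))|
      ≤ ((n:ℝ) + 1)⁻¹ * ((n+1) * θ) := by
        refine mul_le_mul_of_nonneg_left ?_ (by positivity)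
        exact_mod_cast hbound
    _ = θ := by
        push_cast
        rw [← mul_assoc, inv_mul_cancel₀ (by positivity : ((n:ℝ)+1) ≠ 0), one_mul]

lemma isOpen_osc (f : X →ᵇ ℝ) (n : ℕ) (ε : ℝ) :
    IsOpen {ψ : X ≃ₜ X | ∃ c : ℝ, ∀ a, |avgB ψ f n a - c| < ε} := by
  rcases isEmpty_or_nonempty X with hX | hX
  · have : {ψ : X ≃ₜ X | ∃ c : ℝ, ∀ a, |avgB ψ f n a - c| < ε} = Set.univ := by
      ext ψ
      simp only [Set.mem_setOf_eq, Set.mem_univ, iff_true]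
      exact ⟨0, fun a => (hX.false a).elim⟩
    rw [this]; exact isOpen_univ
  refine Metric.isOpen_iff.mpr ?_
  rintro ψ ⟨c, hc⟩
  have hcont : Continuous fun a : X => |avgB ψ f n a - c| :=
    ((avgB ψ f n).continuous.sub continuous_const).abs
  obtain ⟨a₀, -, ha₀'⟩ := isCompact_univ.exists_isMaxOn Set.univ_nonempty hcont.continuousOn
  rw [isMaxOn_iff] at ha₀'
  have ha₀ : ∀ a : X, |avgB ψ f n a - c| ≤ |avgB ψ f n a₀ - c| := fun a => ha₀' a trivial
  set M := |avgB ψ f n a₀ - c| with hM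
  have hMε : M < ε := hc a₀
  obtain ⟨δ, hδ, happ⟩ := avg_approx ψ f n ((ε - M)/2) (by linarith)
  refine ⟨δ, hδ, fun φ hφ => ⟨c, fun a => ?_⟩⟩
  rw [Metric.mem_ball] at hφ
  calc |avgB φ f n a - c| ≤ |avgB φ f n a - avgB ψ f n a| + |avgB ψ f n a - c| := by
        have := abs_sub_abs_le_abs_sub (avgB φ f n a - c) (avgB ψ f n a - c)
        calc |avgB φ f n a - c| = |(avgB φ f n a - avgB ψ f n a) + (avgB ψ f n a - c)| := by
              ring_nf
          _ ≤ _ := abs_add_le _ _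
    _ ≤ (ε - M)/2 + M := add_le_add (happ φ hφ a) (ha₀ a)
    _ < ε := by linarith

end Top

end UE


open UE in
/-- The set of uniquely ergodic homeomorphisms of a compact metric space `X`
(those admitting exactly one invariant Borel probability measure) is a `G_δ`
subset of `Homeo(X)` with the uniform metric. -/
theorem stmt_6 {X : Type*} [MetricSpace X] [CompactSpace X]
    [MeasurableSpace X] [BorelSpace X] :
    IsGδ {ψ : X ≃ₜ X |
      ∃! μ : ProbabilityMeasure X, MeasurePreserving ⇑ψ (μ : Measure X) μ} := by
  classical
  rcases isEmpty_or_nonempty X with hX | hX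
  · have hempty : {ψ : X ≃ₜ X |
        ∃! μ : ProbabilityMeasure X, MeasurePreserving ⇑ψ (μ : Measure X) μ} = ∅ := by
      ext ψ
      simp only [Set.mem_setOf_eq, Set.mem_empty_iff_false, iff_false]
      rintro ⟨μ, -, -⟩
      have h1 : (μ : Measure X) Set.univ = 1 := measure_univ
      rw [Set.univ_eq_empty_iff.mpr hX, measure_empty] at h1
      exact zero_ne_one h1
    rw [hempty]
    exact IsGδ.empty
  · obtain ⟨s, hs⟩ := TopologicalSpace.exists_dense_seq C(X, ℝ)
    set f : ℕ → (X →ᵇ ℝ) := fun k => BoundedContinuousFunction.mkOfCompact (s k) with hf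
    have hset : {ψ : X ≃ₜ X |
        ∃! μ : ProbabilityMeasure X, MeasurePreserving ⇑ψ (μ : Measure X) μ}
        = ⋂ (k : ℕ), ⋂ (m : ℕ), ⋃ (n : ℕ),
          {ψ : X ≃ₜ X | ∃ c : ℝ, ∀ a, |avgB ψ (f k) n a - c| < 1/((m:ℝ)+1)} := by
      ext ψ
      simp only [Set.mem_setOf_eq, Set.mem_iInter, Set.mem_iUnion]
      constructor
      · intro hue k m
        by_contra hno
        push_neg at hno
        have hε : (0:ℝ) < 1/((m:ℝ)+1) := by positivity
        have hmax : ∀ n : ℕ, ∃ a₀ : X, ∀ a, avgB ψ (f k) n a ≤ avgB ψ (f k) n a₀ := by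
          intro n
          obtain ⟨a₀, -, h⟩ := isCompact_univ.exists_isMaxOn Set.univ_nonempty
            (avgB ψ (f k) n).continuous.continuousOn
          rw [isMaxOn_iff] at h
          exact ⟨a₀, fun a => h a trivial⟩
        have hmin : ∀ n : ℕ, ∃ a₀ : X, ∀ a, avgB ψ (f k) n a₀ ≤ avgB ψ (f k) n a := by
          intro n
          obtain ⟨a₀, -, h⟩ := isCompact_univ.exists_isMinOn Set.univ_nonempty
            (avgB ψ (f k) n).continuous.continuousOn
          rw [isMinOn_iff] at h
          exact ⟨a₀, fun a => h a trivial⟩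
        set xmax : ℕ → X := fun n => (hmax n).choose with hxmaxdef
        set xmin : ℕ → X := fun n => (hmin n).choose with hxmindef
        have hxmax : ∀ n a, avgB ψ (f k) n a ≤ avgB ψ (f k) n (xmax n) :=
          fun n => (hmax n).choose_spec
        have hxmin : ∀ n a, avgB ψ (f k) n (xmin n) ≤ avgB ψ (f k) n a :=
          fun n => (hmin n).choose_spec
        have hgap : ∀ n, 1/((m:ℝ)+1) ≤ avgB ψ (f k) n (xmax n) - avgB ψ (f k) n (xmin n) := by
          intro n
          obtain ⟨a, ha⟩ := hno n ((avgB ψ (f k) n (xmax n) + avgB ψ (f k) n (xmin n))/2)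
          have h1 := hxmax n a
          have h2 := hxmin n a
          have h3 : |avgB ψ (f k) n a -
              (avgB ψ (f k) n (xmax n) + avgB ψ (f k) n (xmin n))/2|
              ≤ (avgB ψ (f k) n (xmax n) - avgB ψ (f k) n (xmin n))/2 :=
            abs_le.mpr ⟨by linarith, by linarith⟩
          have h4 := le_trans ha h3
          linarith
        set U : Ultrafilter ℕ := Ultrafilter.of atTop with hUdef
        have hU : (↑U : Filter ℕ) ≤ atTop := Ultrafilter.of_le _
        set μ : Measure X := mu ψ xmax U with hμdef
        set ν : Measure X := mu ψ xmin U with hνdef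
        have hPQ : (⟨μ, inferInstance⟩ : ProbabilityMeasure X)
            = (⟨ν, inferInstance⟩ : ProbabilityMeasure X) :=
          hue.unique (mu_preserving ψ xmax U hU) (mu_preserving ψ xmin U hU)
        have hμν : μ = ν := congrArg (fun p : ProbabilityMeasure X => (p : Measure X)) hPQ
        have hlam : lam ψ xmax U (f k) = lam ψ xmin U (f k) := by
          rw [← integral_mu_eq_lam ψ xmax U hU, ← integral_mu_eq_lam ψ xmin U hU,
            ← hμdef, ← hνdef, hμν]
        have htend := (lam_spec ψ xmax U (f k)).sub (lam_spec ψ xmin U (f k))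
        have hge : 1/((m:ℝ)+1) ≤ lam ψ xmax U (f k) - lam ψ xmin U (f k) := by
          refine le_of_tendsto_of_tendsto' tendsto_const_nhds htend fun n => ?_
          rw [integral_emp, integral_emp]
          exact hgap n
        rw [hlam, sub_self] at hge
        linarith
      · intro hosc
        have hosc' : ∀ j : ℕ, ∀ ε : ℝ, 0 < ε →
            ∃ n : ℕ, ∃ c : ℝ, ∀ a, |avgB ψ (f j) n a - c| < ε := by
          intro j ε hε
          obtain ⟨m, hm⟩ := exists_nat_one_div_lt hε
          obtain ⟨n, c, hnc⟩ := hosc j m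
          exact ⟨n, c, fun a => (hnc a).trans hm⟩
        set x₀ : X := hX.some with hx₀
        set U₀ : Ultrafilter ℕ := Ultrafilter.of atTop with hU₀def
        have hU₀ : (↑U₀ : Filter ℕ) ≤ atTop := Ultrafilter.of_le _
        refine ⟨⟨mu ψ (fun _ => x₀) U₀, inferInstance⟩,
          mu_preserving ψ (fun _ => x₀) U₀ hU₀, ?_⟩
        rintro Q hQ
        apply MeasureTheory.ProbabilityMeasure.toMeasure_injective
        show (Q : Measure X) = mu ψ (fun _ => x₀) U₀
        refine measure_ext_of_integral ?_
        refine integral_eq_of_dense s hs ?_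
        intro j
        exact integral_eq_of_osc ψ hQ (mu_preserving ψ (fun _ => x₀) U₀ hU₀) (f j) (hosc' j)
    rw [hset]
    exact IsGδ.iInter fun k => IsGδ.iInter fun m =>
      (isOpen_iUnion fun n => isOpen_osc (f k) n (1/((m:ℝ)+1))).isGδ
end

section
/- Let (X,φ) be a topological dynamical system and (Y,ψ,π) a factor where ψ is an isometry of the compact metric space Y. If for every ε > 0 there exists K ∈ ℕ such that π(x) = π(y) implies (1/K) Σ_{i=0}^{K} d_X(φ^i(x), φ^i(y)) < ε, then (X,φ) is mean equicontinuous. -/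
/-!
Fix `K` with fibre block averages below `ε / 2`. The block average over `K + 1` steps is
continuous on the compact space `X × X`, so it stays below `ε / 2` on pairs whose images under `π`
are close. Since `ψ` is an isometry, `d(π (φⁿ x), π (φⁿ y)) = d(π x, π y)` for all `n`: once
`x, y` are close, every block along their orbits has small average, hence so do the long
Cesàro averages.
-/

open Filter Finset

theorem exists_pos_forall_lt_imp_lt {Z : Type*} [TopologicalSpace Z] [CompactSpace Z]
    {f g : Z → ℝ} {c : ℝ} (hf : Continuous f) (hg : Continuous g)
    (hfg : ∀ z, c ≤ f z → 0 < g z) : ∃ δ > 0, ∀ z, g z < δ → f z < c := by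
  obtain ⟨δ, hδ, hle⟩ := (isClosed_le continuous_const hf).isCompact.exists_forall_le'
    hg.continuousOn hfg
  exact ⟨δ, hδ, fun z hz => not_le.mp fun hcz => (hle z hcz).not_gt hz⟩

theorem dist_iterate_of_dist_eq {Y : Type*} [PseudoMetricSpace Y] {f : Y → Y}
    (hf : ∀ a b, dist (f a) (f b) = dist a b) (n : ℕ) (a b : Y) :
    dist (f^[n] a) (f^[n] b) = dist a b := by
  induction n with
  | zero => rfl
  | succ n ih => rw [Function.iterate_succ_apply', Function.iterate_succ_apply', hf, ih]

theorem continuous_sum_dist_iterate {X : Type*} [PseudoMetricSpace X] {f : X → X}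
    (hf : Continuous f) (s : Finset ℕ) :
    Continuous fun p : X × X => ∑ i ∈ s, dist (f^[i] p.1) (f^[i] p.2) :=
  continuous_finsetSum s fun i _ =>
    ((hf.iterate i).comp continuous_fst).dist ((hf.iterate i).comp continuous_snd)

section BlockAverages

variable {d : ℕ → ℝ} {L : ℕ} {c : ℝ}

theorem sum_range_mul_le_of_block_sum_le (hblock : ∀ j, ∑ i ∈ range L, d (j + i) ≤ L * c)
    (m : ℕ) : ∑ i ∈ range (m * L), d i ≤ m * L * c := by
  induction m with
  | zero => simp
  | succ m ih =>
    rw [Nat.succ_mul, sum_range_add]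
    push_cast
    linarith [hblock (m * L)]

theorem sum_range_le_of_block_sum_le (hd : ∀ i, 0 ≤ d i) (hL : 0 < L)
    (hblock : ∀ j, ∑ i ∈ range L, d (j + i) ≤ L * c) (n : ℕ) :
    ∑ i ∈ range n, d i ≤ (n + L) * c := by
  have hc : 0 ≤ c := by
    have := (sum_nonneg fun i _ => hd (0 + i)).trans (hblock 0)
    exact nonneg_of_mul_nonneg_right (by simpa [mul_comm] using this) (by exact_mod_cast hL)
  have hcover : n ≤ (n / L + 1) * L := by rw [Nat.succ_mul]; exact (Nat.lt_div_mul_add hL).le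
  calc ∑ i ∈ range n, d i ≤ ∑ i ∈ range ((n / L + 1) * L), d i :=
        sum_le_sum_of_subset_of_nonneg (range_subset_range.mpr hcover) fun i _ _ => hd i
    _ ≤ ((n / L + 1 : ℕ) : ℝ) * L * c := sum_range_mul_le_of_block_sum_le hblock _
    _ ≤ (n + L) * c := by
        gcongr
        push_cast
        have : ((n / L : ℕ) : ℝ) * L ≤ n := by exact_mod_cast Nat.div_mul_le_self n L
        linarith

theorem limsup_average_le_of_block_sum_le (hd : ∀ i, 0 ≤ d i) (hL : 0 < L)
    (hblock : ∀ j, ∑ i ∈ range L, d (j + i) ≤ L * c) :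
    atTop.limsup (fun n : ℕ => (∑ i ∈ range n, d i) / n) ≤ c := by
  have hlim : Tendsto (fun n : ℕ => c + L * c / n) atTop (nhds c) := by
    simpa using tendsto_const_nhds.add (tendsto_const_div_atTop_nhds_zero_nat (L * c))
  rw [← hlim.limsup_eq]
  refine limsup_le_limsup ?_ (isCoboundedUnder_le_of_le atTop fun n =>
    div_nonneg (sum_nonneg fun i _ => hd i) n.cast_nonneg) hlim.isBoundedUnder_le
  filter_upwards [eventually_gt_atTop 0] with n hn
  have hn' : (0 : ℝ) < n := by exact_mod_cast hn
  rw [div_le_iff₀ hn']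
  calc ∑ i ∈ range n, d i ≤ (n + L) * c := sum_range_le_of_block_sum_le hd hL hblock n
    _ = (c + L * c / n) * n := by field_simp

end BlockAverages

theorem stmt_9_general {X Y : Type*} [MetricSpace X] [CompactSpace X]
    [MetricSpace Y]
    (φ : X ≃ₜ X) (ψ : Y ≃ₜ Y) (hiso : ∀ a b : Y, dist (ψ a) (ψ b) = dist a b)
    (π : C(X, Y))
    (hfac : ∀ x, π (φ x) = ψ (π x))
    (h : ∀ ε > (0 : ℝ), ∃ K : ℕ, 0 < K ∧ ∀ x y : X, π x = π y →
      (∑ i ∈ Finset.range (K + 1), dist ((⇑φ)^[i] x) ((⇑φ)^[i] y)) / K < ε) :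
    ∀ ε > (0 : ℝ), ∃ δ > (0 : ℝ), ∀ x y : X, dist x y < δ →
      Filter.atTop.limsup (fun n : ℕ =>
        (∑ i ∈ Finset.range n, dist ((⇑φ)^[i] x) ((⇑φ)^[i] y)) / n) < ε := by
  intro ε hε
  obtain ⟨K, hK, hfiber⟩ := h (ε / 2) (half_pos hε)
  obtain ⟨η, hη, hnear⟩ := exists_pos_forall_lt_imp_lt
    ((continuous_sum_dist_iterate φ.continuous (range (K + 1))).div_const (K : ℝ))
    (g := fun p => dist (π p.1) (π p.2)) (by fun_prop)
    fun p hp => dist_pos.mpr fun heq => (hfiber p.1 p.2 heq).not_ge hp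
  obtain ⟨δ, hδ, hπδ⟩ := Metric.uniformContinuous_iff.mp
    (CompactSpace.uniformContinuous_of_continuous π.continuous) η hη
  refine ⟨δ, hδ, fun x y hxy => ?_⟩
  have hπorbit : ∀ n z, π (φ^[n] z) = ψ^[n] (π z) := (Function.Semiconj.iterate_right hfac ·)
  have hblock : ∀ j, ∑ i ∈ range (K + 1), dist (φ^[j + i] x) (φ^[j + i] y) ≤
      ↑(K + 1) * (ε / 2) := by
    intro j
    have hj := hnear (φ^[j] x, φ^[j] y) (by
      rw [hπorbit, hπorbit, dist_iterate_of_dist_eq hiso]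
      exact hπδ hxy)
    simp only [← Function.iterate_add_apply, add_comm _ j] at hj
    rw [div_lt_iff₀ (by exact_mod_cast hK)] at hj
    push_cast
    linarith
  calc _ ≤ ε / 2 := limsup_average_le_of_block_sum_le (fun _ => dist_nonneg) K.succ_pos hblock
    _ < ε := half_lt_self hε

/-- If `(Y, ψ, π)` is a factor of `(X, φ)` with `ψ` an isometry, and for every
`ε > 0` there is `K ∈ ℕ` such that `π(x) = π(y)` implies
`(1/K) Σ_{i=0}^{K} d(φ^i x, φ^i y) < ε`, then `(X, φ)` is mean
equicontinuous. -/
theorem stmt_9 {X Y : Type*} [MetricSpace X] [CompactSpace X]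
    [MetricSpace Y] [CompactSpace Y]
    (φ : X ≃ₜ X) (ψ : Y ≃ₜ Y) (hiso : ∀ a b : Y, dist (ψ a) (ψ b) = dist a b)
    (π : C(X, Y)) (hsurj : Function.Surjective π)
    (hfac : ∀ x, π (φ x) = ψ (π x))
    (h : ∀ ε > (0 : ℝ), ∃ K : ℕ, 0 < K ∧ ∀ x y : X, π x = π y →
      (∑ i ∈ Finset.range (K + 1), dist ((⇑φ)^[i] x) ((⇑φ)^[i] y)) / K < ε) :
    ∀ ε > (0 : ℝ), ∃ δ > (0 : ℝ), ∀ x y : X, dist x y < δ →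
      Filter.atTop.limsup (fun n : ℕ =>
        (∑ i ∈ Finset.range n, dist ((⇑φ)^[i] x) ((⇑φ)^[i] y)) / n) < ε :=
  stmt_9_general φ ψ hiso π hfac h
end

section
/- Let φ be a skew product homeomorphism of the two-torus 𝕋² = (ℝ/ℤ)², φ(x,y) = (x + α, φ_x(y)), which is uniquely ergodic with invariant measure μ = (Id × γ)_* Leb for a measurable function γ: 𝕋¹ → 𝕋¹. For m ∈ ℕ, define γ_j(x) = (γ(x) + j − 1)/m for j = 1,…,m, and let ψ: 𝕋² → 𝕋² be the rescaled lift ψ(x,y) = h ∘ L ∘ h^{-1}(x,y) where L is a lift of φ to ℝ/ℤ × ℝ/mℤ and h(x,y) = (x, y/m). Then μ^ψ = (1/m) Σ_{j=1}^m (Id × γ_j)_* Leb is a ψ-invariant Borel probability measure. -/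
open MeasureTheory Finset
open scoped ENNReal

instance : Fact ((0 : ℝ) < 1) := ⟨one_pos⟩

/-- `γ_j(x) = (γ(x) + j − 1)/m`, defined via the representative of `γ(x)` in
`[0,1)`. -/
noncomputable def gammaJ (m : ℕ) (γ : UnitAddCircle → UnitAddCircle) (j : ℕ) :
    UnitAddCircle → UnitAddCircle :=
  fun x => ((((AddCircle.equivIco 1 0 (γ x) : Set.Ico (0 : ℝ) (0 + 1)) : ℝ)
      + j - 1) / m : ℝ)

namespace Stmt14

noncomputable def lft (z : UnitAddCircle) : ℝ :=
  ((AddCircle.equivIco 1 0 z : Set.Ico (0:ℝ) (0+1)) : ℝ)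

lemma lft_coe (z : UnitAddCircle) : ((lft z : ℝ) : UnitAddCircle) = z :=
  (AddCircle.equivIco 1 0).symm_apply_apply z

lemma lft_mem (z : UnitAddCircle) : lft z ∈ Set.Ico (0:ℝ) 1 := by
  have := (AddCircle.equivIco 1 0 z).2
  simpa [lft] using this

lemma meas_lft : Measurable lft :=
  measurable_subtype_coe.comp (AddCircle.measurableEquivIco 1 0).measurable

lemma coe_int_zero (n : ℤ) : (((n:ℝ)) : UnitAddCircle) = 0 :=
  (AddCircle.coe_eq_zero_iff 1).2 ⟨n, by simp⟩

lemma coe_nat_zero (n : ℕ) : (((n:ℝ)) : UnitAddCircle) = 0 := by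
  simpa using coe_int_zero n

lemma nsmul_coe (n : ℕ) (r : ℝ) :
    n • ((r : ℝ) : UnitAddCircle) = ((n * r : ℝ) : UnitAddCircle) := by
  rw [← AddCircle.coe_nsmul, nsmul_eq_mul]

lemma coe_add (r s : ℝ) :
    ((r + s : ℝ) : UnitAddCircle) = (r : UnitAddCircle) + (s : UnitAddCircle) := rfl

lemma meas_coe : Measurable ((↑·) : ℝ → UnitAddCircle) :=
  (AddCircle.continuous_mk' 1).measurable

lemma torsion {m : ℕ} (hm : 1 ≤ m) {c : UnitAddCircle} (h : m • c = 0) :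
    ∃ k : ℕ, k < m ∧ c = (((k : ℝ) / m : ℝ) : UnitAddCircle) := by
  have hc : ((lft c : ℝ) : UnitAddCircle) = c := lft_coe c
  have h0 : ((m * lft c : ℝ) : UnitAddCircle) = 0 := by
    rw [← nsmul_coe, hc]; exact h
  obtain ⟨n, hn⟩ := (AddCircle.coe_eq_zero_iff 1).1 h0
  have hn' : (n : ℝ) = m * lft c := by simpa using hn
  have hmem := lft_mem c
  have hm0 : (0:ℝ) < m := by exact_mod_cast hm
  have hn0 : 0 ≤ n := by
    have : (0:ℝ) ≤ (n:ℝ) := by rw [hn']; exact mul_nonneg hm0.le hmem.1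
    exact_mod_cast this
  have hnm : n < m := by
    have : (n:ℝ) < m := by
      rw [hn']
      calc (m:ℝ) * lft c < m * 1 := by
            exact mul_lt_mul_of_pos_left hmem.2 hm0
        _ = m := mul_one _
    exact_mod_cast this
  refine ⟨n.toNat, by omega, ?_⟩
  have : lft c = (n.toNat : ℝ) / m := by
    have : (n.toNat : ℝ) = (n : ℝ) := by
      exact_mod_cast congrArg (Int.cast : ℤ → ℝ) (Int.toNat_of_nonneg hn0)
    rw [this, hn']; field_simp
  rw [← hc, this]

lemma nsmul_mod {m : ℕ} {c : UnitAddCircle} (h : m • c = 0) (n : ℕ) :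
    (n % m) • c = n • c := by
  conv_rhs => rw [← Nat.mod_add_div n m]
  rw [add_nsmul, mul_nsmul, h, smul_zero, add_zero]

lemma sum_cycle (m : ℕ) (j : ℕ) :
    ∀ G : ℕ → ℝ≥0∞, ∑ k ∈ range m, G ((j + k) % m) = ∑ k ∈ range m, G (k % m) := by
  have hmm : ∀ a : ℕ, a % m % m = a % m := fun a => Nat.mod_mod_of_dvd a dvd_rfl
  induction j with
  | zero => intro G; simp
  | succ j ih =>
    intro G
    have h1 : ∀ k, (j + 1 + k) % m = ((j + k) % m + 1) % m := by
      intro k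
      conv_lhs => rw [show j + 1 + k = j + k + 1 by ring, Nat.add_mod (j+k) 1 m]
      rw [Nat.add_mod ((j+k) % m) 1 m, hmm]
    have key := ih (fun t => G ((t + 1) % m))
    calc ∑ k ∈ range m, G ((j + 1 + k) % m)
        = ∑ k ∈ range m, G (((j + k) % m + 1) % m) := by
          exact Finset.sum_congr rfl fun k _ => by rw [h1 k]
      _ = ∑ k ∈ range m, G ((k % m + 1) % m) := key
      _ = ∑ k ∈ range m, G ((k + 1) % m) := by
          refine Finset.sum_congr rfl fun k hk => ?_
          rw [Nat.mod_eq_of_lt (Finset.mem_range.1 hk)]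
      _ = ∑ k ∈ range m, G (k % m) := by
          rcases Nat.eq_zero_or_pos m with hm | hm
          · simp [hm]
          obtain ⟨n, rfl⟩ := Nat.exists_eq_add_of_le hm
          simp only [Nat.add_comm 1 n]
          rw [Finset.sum_range_succ]
          have e1 : ∀ k ∈ range n, G ((k + 1) % (n + 1)) = G (k+1) := fun k hk =>
            by rw [Nat.mod_eq_of_lt (by have := Finset.mem_range.1 hk; omega)]
          rw [Finset.sum_congr rfl e1, Nat.mod_self]
          have e2 : ∀ k ∈ range (n+1), G (k % (n + 1)) = G k := fun k hk =>
            by rw [Nat.mod_eq_of_lt (Finset.mem_range.1 hk)]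
          rw [Finset.sum_congr rfl e2, Finset.sum_range_succ']

section Gamma

variable (m : ℕ) (γ : UnitAddCircle → UnitAddCircle)

lemma gammaJ_eq (j : ℕ) (x : UnitAddCircle) :
    gammaJ m γ j x = (((lft (γ x) + j - 1) / m : ℝ) : UnitAddCircle) := rfl

lemma meas_gammaJ (hγ : Measurable γ) (j : ℕ) : Measurable (gammaJ m γ j) := by
  have h1 : Measurable (fun x => (lft (γ x) + j - 1) / m) :=
    ((((meas_lft.comp hγ).add_const ((j:ℝ))).sub_const 1).div_const m)
  exact meas_coe.comp h1

lemma meas_graph (hγ : Measurable γ) (j : ℕ) :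
    Measurable (fun x => (x, gammaJ m γ j x)) :=
  measurable_id.prodMk (meas_gammaJ m γ hγ j)

lemma msmul_gammaJ (hm : 1 ≤ m) (j : ℕ) (x : UnitAddCircle) :
    m • gammaJ m γ j x = γ x := by
  have hm0 : (m:ℝ) ≠ 0 := by positivity
  rw [gammaJ_eq, nsmul_coe]
  have h1 : (m:ℝ) * ((lft (γ x) + j - 1) / m) = lft (γ x) + (((j:ℤ) - 1 : ℤ) : ℝ) := by
    field_simp
    push_cast
    ring
  rw [h1, coe_add, coe_int_zero, add_zero, lft_coe]

lemma gammaJ_add_tors (hm : 1 ≤ m) (j k : ℕ) (hj : j ∈ Finset.Icc 1 m) (hk : k < m)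
    (x : UnitAddCircle) :
    gammaJ m γ j x + (((k : ℝ) / m : ℝ) : UnitAddCircle)
      = gammaJ m γ (if j + k ≤ m then j + k else j + k - m) x := by
  obtain ⟨hj1, hjm⟩ := Finset.mem_Icc.1 hj
  have hm0 : (m:ℝ) ≠ 0 := by positivity
  rw [gammaJ_eq, ← coe_add]
  have h1 : (lft (γ x) + j - 1) / m + (k:ℝ)/m = (lft (γ x) + (j + k) - 1) / m := by
    field_simp; ring
  rw [h1]
  split_ifs with h
  · rw [gammaJ_eq]
    norm_num [Nat.cast_add]
  · have hjk : m ≤ j + k := by omega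
    rw [gammaJ_eq]
    have h2 : ((j + k - m : ℕ) : ℝ) = (j:ℝ) + k - m := by
      push_cast [Nat.cast_sub hjk]; ring
    rw [h2]
    have h3 : (lft (γ x) + (↑j + ↑k) - 1) / (m:ℝ)
        = (lft (γ x) + ((j:ℝ) + ↑k - ↑m) - 1) / m + 1 := by
      field_simp; ring
    rw [h3, coe_add, show ((1:ℝ) : UnitAddCircle) = 0 from AddCircle.coe_period 1, add_zero]

lemma map_fsum {ι : Type*} (s : Finset ι)
    (μs : ι → Measure (UnitAddCircle × UnitAddCircle))
    {f : UnitAddCircle × UnitAddCircle → UnitAddCircle × UnitAddCircle} (hf : Measurable f) :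
    Measure.map f (∑ j ∈ s, μs j) = ∑ j ∈ s, Measure.map f (μs j) := by
  classical
  induction s using Finset.induction_on with
  | empty => simp only [Finset.sum_empty, Measure.map_zero]
  | insert _ _ ha ih =>
    rw [Finset.sum_insert ha, Finset.sum_insert ha, Measure.map_add _ _ hf, ih]

lemma meas_translate (c : UnitAddCircle) :
    Measurable (fun p : UnitAddCircle × UnitAddCircle => (p.1, p.2 + c)) :=
  measurable_fst.prodMk (measurable_snd.add_const c)

lemma sum_graph_translate (hγ : Measurable γ) (hm : 1 ≤ m) {c : UnitAddCircle}
    (hc : m • c = 0) :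
    Measure.map (fun p : UnitAddCircle × UnitAddCircle => (p.1, p.2 + c))
        (∑ j ∈ Finset.Icc 1 m, Measure.map (fun x => (x, gammaJ m γ j x)) volume)
      = ∑ j ∈ Finset.Icc 1 m, Measure.map (fun x => (x, gammaJ m γ j x)) volume := by
  obtain ⟨k, hk, rfl⟩ := torsion hm hc
  rw [map_fsum _ _ (meas_translate _)]
  have hstep : ∀ j ∈ Finset.Icc 1 m,
      Measure.map (fun p : UnitAddCircle × UnitAddCircle => (p.1, p.2 + (((k : ℝ) / m : ℝ) : UnitAddCircle)))
          (Measure.map (fun x => (x, gammaJ m γ j x)) volume)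
        = Measure.map
            (fun x => (x, gammaJ m γ (if j + k ≤ m then j + k else j + k - m) x)) volume := by
    intro j hj
    rw [Measure.map_map (meas_translate _) (meas_graph m γ hγ j)]
    congr 1
    funext x
    simp only [Function.comp_apply]
    rw [gammaJ_add_tors m γ hm j k hj hk x]
  rw [Finset.sum_congr rfl hstep]
  refine Finset.sum_nbij' (fun j => if j + k ≤ m then j + k else j + k - m)
    (fun j => if k + 1 ≤ j then j - k else j + m - k) ?_ ?_ ?_ ?_ ?_
  · intro a ha; have := Finset.mem_Icc.1 ha; rw [Finset.mem_Icc]; split_ifs <;> omega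
  · intro a ha; have := Finset.mem_Icc.1 ha; rw [Finset.mem_Icc]; split_ifs <;> omega
  · intro a ha; have := Finset.mem_Icc.1 ha; split_ifs <;> omega
  · intro a ha; have := Finset.mem_Icc.1 ha; split_ifs <;> omega
  · intro a ha; rfl

end Gamma

section Lift

variable (m : ℕ)

noncomputable def sect (z : UnitAddCircle) : UnitAddCircle := ((lft z / m : ℝ) : UnitAddCircle)

lemma meas_sect : Measurable (sect m) := meas_coe.comp (meas_lft.div_const m)

lemma msmul_sect (hm : 1 ≤ m) (z : UnitAddCircle) : m • sect m z = z := by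
  have hm0 : (m:ℝ) ≠ 0 := by positivity
  rw [sect, nsmul_coe]
  rw [show (m:ℝ) * (lft z / m) = lft z by field_simp]
  exact lft_coe z

noncomputable def c0 : UnitAddCircle := (((m:ℝ)⁻¹ : ℝ) : UnitAddCircle)

lemma msmul_c0 (hm : 1 ≤ m) : m • c0 m = 0 := by
  have hm0 : (m:ℝ) ≠ 0 := by positivity
  rw [c0, nsmul_coe, mul_inv_cancel₀ hm0]
  exact AddCircle.coe_period 1

lemma coe_div_eq_nsmul_c0 (k : ℕ) :
    (((k : ℝ) / m : ℝ) : UnitAddCircle) = k • c0 m := by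
  rw [c0, nsmul_coe, div_eq_mul_inv]

noncomputable def pr : UnitAddCircle × UnitAddCircle → UnitAddCircle × UnitAddCircle :=
  fun p => (p.1, m • p.2)

lemma meas_pr : Measurable (pr m) :=
  measurable_fst.prodMk ((continuous_nsmul m).measurable.comp measurable_snd)

lemma rep (hm : 1 ≤ m) (ν : Measure (UnitAddCircle × UnitAddCircle))
    (hν : Measure.map (fun p : UnitAddCircle × UnitAddCircle => (p.1, p.2 + c0 m)) ν = ν)
    {A : Set (UnitAddCircle × UnitAddCircle)} (hA : MeasurableSet A) :
    ν A = (m : ℝ≥0∞)⁻¹ * ∫⁻ q, (∑ k ∈ range m,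
        A.indicator (1 : (UnitAddCircle × UnitAddCircle) → ℝ≥0∞) (q.1, sect m q.2 + k • c0 m))
      ∂(Measure.map (pr m) ν) := by
  have hm0 : (m : ℝ≥0∞) ≠ 0 := Nat.cast_ne_zero.2 (by omega)
  have hc0 := msmul_c0 m hm
  -- iterated invariance
  have hiter : ∀ k : ℕ, ∀ B : Set (UnitAddCircle × UnitAddCircle), MeasurableSet B →
      ν ((fun p : UnitAddCircle × UnitAddCircle => (p.1, p.2 + k • c0 m)) ⁻¹' B) = ν B := by
    intro k
    induction k with
    | zero => intro B _; simp
    | succ k ih =>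
      intro B hB
      have hcomp : (fun p : UnitAddCircle × UnitAddCircle => (p.1, p.2 + (k+1) • c0 m))
          = (fun p : UnitAddCircle × UnitAddCircle => (p.1, p.2 + c0 m))
            ∘ (fun p : UnitAddCircle × UnitAddCircle => (p.1, p.2 + k • c0 m)) := by
        funext p
        simp [succ_nsmul, add_assoc]
      rw [hcomp, Set.preimage_comp]
      rw [ih _ ((meas_translate (c0 m)) hB)]
      conv_rhs => rw [← hν]
      rw [Measure.map_apply (meas_translate (c0 m)) hB]
  -- each translated measure of A equals ν A
  have hTk : ∀ k : ℕ,
      ν ((fun p : UnitAddCircle × UnitAddCircle => (p.1, p.2 + k • c0 m)) ⁻¹' A) = ν A :=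
    fun k => hiter k A hA
  -- express as lintegral
  have hmeasTk : ∀ k : ℕ,
      Measurable (fun p : UnitAddCircle × UnitAddCircle => (p.1, p.2 + k • c0 m)) :=
    fun k => meas_translate _
  have hind : Measurable (A.indicator (1 : (UnitAddCircle × UnitAddCircle) → ℝ≥0∞)) :=
    measurable_one.indicator hA
  have step1 : ∀ k : ℕ, ν ((fun p : UnitAddCircle × UnitAddCircle
        => (p.1, p.2 + k • c0 m)) ⁻¹' A)
      = ∫⁻ p, A.indicator (1 : (UnitAddCircle × UnitAddCircle) → ℝ≥0∞)
          (p.1, p.2 + k • c0 m) ∂ν := by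
    intro k
    rw [← lintegral_indicator_one ((hmeasTk k) hA)]
    refine lintegral_congr fun p => ?_
    by_cases h : (p.1, p.2 + k • c0 m) ∈ A <;>
      simp [Set.indicator_apply, Set.mem_preimage, h]
  -- the pointwise identity
  have hpoint : ∀ p : UnitAddCircle × UnitAddCircle,
      (∑ k ∈ range m, A.indicator (1 : (UnitAddCircle × UnitAddCircle) → ℝ≥0∞)
        (p.1, p.2 + k • c0 m))
      = ∑ k ∈ range m, A.indicator (1 : (UnitAddCircle × UnitAddCircle) → ℝ≥0∞)
        ((pr m p).1, sect m (pr m p).2 + k • c0 m) := by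
    intro p
    set y₀ := sect m (m • p.2) with hy₀def
    have hy₀ : m • y₀ = m • p.2 := msmul_sect m hm _
    have htors : m • (p.2 - y₀) = 0 := by rw [smul_sub, hy₀, sub_self]
    obtain ⟨j, hj, hjeq⟩ := torsion hm htors
    have hp2 : p.2 = y₀ + j • c0 m := by
      rw [← coe_div_eq_nsmul_c0, ← hjeq, add_sub_cancel]
    have hterm : ∀ k : ℕ, p.2 + k • c0 m = y₀ + ((j + k) % m) • c0 m := by
      intro k
      rw [hp2, add_assoc, ← add_nsmul, nsmul_mod hc0]
    calc (∑ k ∈ range m, A.indicator (1 : (UnitAddCircle × UnitAddCircle) → ℝ≥0∞)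
          (p.1, p.2 + k • c0 m))
        = ∑ k ∈ range m, (fun i => A.indicator
            (1 : (UnitAddCircle × UnitAddCircle) → ℝ≥0∞) (p.1, y₀ + i • c0 m)) ((j + k) % m) := by
          refine Finset.sum_congr rfl fun k _ => ?_
          rw [hterm k]
      _ = ∑ k ∈ range m, (fun i => A.indicator
            (1 : (UnitAddCircle × UnitAddCircle) → ℝ≥0∞) (p.1, y₀ + i • c0 m)) (k % m) :=
          sum_cycle m j (fun i => A.indicator
            (1 : (UnitAddCircle × UnitAddCircle) → ℝ≥0∞) (p.1, y₀ + i • c0 m))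
      _ = ∑ k ∈ range m, A.indicator (1 : (UnitAddCircle × UnitAddCircle) → ℝ≥0∞)
            ((pr m p).1, sect m (pr m p).2 + k • c0 m) := by
          refine Finset.sum_congr rfl fun k hk => ?_
          simp only [Nat.mod_eq_of_lt (Finset.mem_range.1 hk), pr, hy₀def]
  -- measurability of the fibre sum integrand
  have hmeasg : ∀ k : ℕ, Measurable (fun q : UnitAddCircle × UnitAddCircle =>
      A.indicator (1 : (UnitAddCircle × UnitAddCircle) → ℝ≥0∞) (q.1, sect m q.2 + k • c0 m)) := by
    intro k
    exact hind.comp (measurable_fst.prodMk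
      (((meas_sect m).comp measurable_snd).add_const _))
  -- put it together
  have main : (m : ℝ≥0∞) * ν A = ∫⁻ q, (∑ k ∈ range m,
      A.indicator (1 : (UnitAddCircle × UnitAddCircle) → ℝ≥0∞) (q.1, sect m q.2 + k • c0 m))
      ∂(Measure.map (pr m) ν) := by
    rw [lintegral_map (by exact Finset.measurable_sum _ fun k _ => hmeasg k) (meas_pr m)]
    calc (m : ℝ≥0∞) * ν A
        = ∑ k ∈ range m, ν ((fun p : UnitAddCircle × UnitAddCircle
            => (p.1, p.2 + k • c0 m)) ⁻¹' A) := by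
          rw [Finset.sum_congr rfl fun k _ => hTk k, Finset.sum_const, Finset.card_range,
            nsmul_eq_mul]
      _ = ∑ k ∈ range m, ∫⁻ p, A.indicator (1 : (UnitAddCircle × UnitAddCircle) → ℝ≥0∞)
            (p.1, p.2 + k • c0 m) ∂ν := Finset.sum_congr rfl fun k _ => step1 k
      _ = ∫⁻ p, (∑ k ∈ range m, A.indicator (1 : (UnitAddCircle × UnitAddCircle) → ℝ≥0∞)
            (p.1, p.2 + k • c0 m)) ∂ν := by
          exact (lintegral_finset_sum _ fun k _ => hind.comp (hmeasTk k)).symm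
      _ = ∫⁻ p, (∑ k ∈ range m, A.indicator (1 : (UnitAddCircle × UnitAddCircle) → ℝ≥0∞)
            ((pr m p).1, sect m (pr m p).2 + k • c0 m)) ∂ν :=
          lintegral_congr hpoint
  rw [← main, ← mul_assoc, ENNReal.inv_mul_cancel hm0 (by simp), one_mul]

lemma unique_lift (hm : 1 ≤ m) (ν₁ ν₂ : Measure (UnitAddCircle × UnitAddCircle))
    (h1 : Measure.map (fun p : UnitAddCircle × UnitAddCircle => (p.1, p.2 + c0 m)) ν₁ = ν₁)
    (h2 : Measure.map (fun p : UnitAddCircle × UnitAddCircle => (p.1, p.2 + c0 m)) ν₂ = ν₂)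
    (hπ : Measure.map (pr m) ν₁ = Measure.map (pr m) ν₂) : ν₁ = ν₂ := by
  ext A hA
  rw [rep m hm ν₁ h1 hA, rep m hm ν₂ h2 hA, hπ]

end Lift

lemma deck (m : ℕ) (hm : 1 ≤ m) (α : UnitAddCircle)
    (φ ψ : (UnitAddCircle × UnitAddCircle) ≃ₜ (UnitAddCircle × UnitAddCircle))
    (hφskew : ∀ p, (φ p).1 = p.1 + α)
    (hcover : ∀ p : UnitAddCircle × UnitAddCircle,
      ((ψ p).1, m • (ψ p).2) = φ (p.1, m • p.2)) :
    ∃ c : UnitAddCircle, m • c = 0 ∧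
      ∀ p : UnitAddCircle × UnitAddCircle,
        ((ψ p).1, (ψ p).2 + c0 m) = ψ (p.1, p.2 + c) := by
  have hψ1 : ∀ p : UnitAddCircle × UnitAddCircle, (ψ p).1 = p.1 + α := by
    intro p
    have := congrArg Prod.fst (hcover p)
    simpa [hφskew] using this
  have hψs1 : ∀ q : UnitAddCircle × UnitAddCircle, (ψ.symm q).1 = q.1 - α := by
    intro q
    have h := hψ1 (ψ.symm q)
    rw [ψ.apply_symm_apply] at h
    rw [eq_sub_iff_add_eq, ← h]
  have hψs2 : ∀ q : UnitAddCircle × UnitAddCircle,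
      m • (ψ.symm q).2 = (φ.symm (q.1, m • q.2)).2 := by
    intro q
    have h := hcover (ψ.symm q)
    rw [ψ.apply_symm_apply] at h
    have h2 := congrArg (⇑φ.symm) h
    rw [Homeomorph.symm_apply_apply] at h2
    exact (congrArg Prod.snd h2).symm
  set δ : UnitAddCircle × UnitAddCircle → UnitAddCircle :=
    fun p => (ψ.symm ((ψ p).1, (ψ p).2 + c0 m)).2 - p.2 with hδdef
  have hδtors : ∀ p, m • δ p = 0 := by
    intro p
    have h1 : m • ((ψ p).2 + c0 m) = m • (ψ p).2 := by
      rw [smul_add, msmul_c0 m hm, add_zero]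
    have h2 : m • (ψ.symm ((ψ p).1, (ψ p).2 + c0 m)).2 = m • p.2 := by
      rw [hψs2]
      simp only [h1]
      rw [show ((ψ p).1, m • (ψ p).2) = φ (p.1, m • p.2) from hcover p]
      rw [Homeomorph.symm_apply_apply]
    rw [hδdef]
    simp only [smul_sub, h2, sub_self]
  have hcont : Continuous δ := by
    have hc1 : Continuous (fun p : UnitAddCircle × UnitAddCircle
        => ((ψ p).1, (ψ p).2 + c0 m)) :=
      (continuous_fst.comp ψ.continuous).prodMk
        ((continuous_snd.comp ψ.continuous).add continuous_const)
    exact (continuous_snd.comp (ψ.symm.continuous.comp hc1)).sub continuous_snd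
  set K : Set UnitAddCircle := {c | m • c = 0} with hKdef
  have hKfin : K.Finite := by
    refine Set.Finite.subset (Set.Finite.image
      (fun k : ℕ => (((k:ℝ)/m : ℝ) : UnitAddCircle)) (Set.finite_Iio m)) ?_
    intro c hc
    obtain ⟨k, hk, he⟩ := torsion hm hc
    exact ⟨k, hk, he.symm⟩
  haveI : Finite ↥K := hKfin.to_subtype
  haveI : DiscreteTopology ↥K := by infer_instance
  have hδ'cont : Continuous (fun p : UnitAddCircle × UnitAddCircle => (⟨δ p, hδtors p⟩ : ↥K)) :=
    hcont.subtype_mk _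
  have hconst : ∀ p q : UnitAddCircle × UnitAddCircle, δ p = δ q := by
    intro p q
    have := PreconnectedSpace.constant (Y := ↥K) inferInstance hδ'cont (x := p) (y := q)
    exact congrArg Subtype.val this
  refine ⟨δ (0, 0), hδtors _, ?_⟩
  intro p
  have h2 : (ψ.symm ((ψ p).1, (ψ p).2 + c0 m)).2 = p.2 + δ (0, 0) := by
    rw [← hconst p (0,0)]
    simp only [hδdef]
    rw [add_comm p.2, sub_add_cancel]
  have h1 : (ψ.symm ((ψ p).1, (ψ p).2 + c0 m)).1 = p.1 := by
    rw [hψs1, hψ1, add_sub_cancel_right]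
  have : ψ.symm ((ψ p).1, (ψ p).2 + c0 m) = (p.1, p.2 + δ (0, 0)) := by
    rw [Prod.ext_iff]; exact ⟨h1, h2⟩
  rw [← this, ψ.apply_symm_apply]

end Stmt14

open Stmt14

/-- Let `φ` be a uniquely ergodic skew product over the rotation by `α` on
`𝕋² = 𝕋¹ × 𝕋¹`, with invariant measure `μ = (Id × γ)_* Leb`.  Let `ψ` be the
rescaled lift of `φ` to the `m`-fold fibre cover, i.e. `(x, m•y) ∘ ψ = φ ∘ (x, m•y)`.
Then `μ^ψ = (1/m) Σ_{j=1}^m (Id × γ_j)_* Leb`, with `γ_j(x) = (γ(x)+j−1)/m`,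
is a `ψ`-invariant Borel probability measure. -/
theorem stmt_14 (m : ℕ) (hm : 1 ≤ m) (α : UnitAddCircle)
    (φ ψ : (UnitAddCircle × UnitAddCircle) ≃ₜ (UnitAddCircle × UnitAddCircle))
    (γ : UnitAddCircle → UnitAddCircle) (hγ : Measurable γ)
    (hφskew : ∀ p, (φ p).1 = p.1 + α)
    (μ : Measure (UnitAddCircle × UnitAddCircle))
    (hμ : μ = Measure.map (fun x => (x, γ x)) volume)
    (hinv : MeasurePreserving ⇑φ μ μ)
    (huniq : ∀ ν : Measure (UnitAddCircle × UnitAddCircle),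
      IsProbabilityMeasure ν → MeasurePreserving ⇑φ ν ν → ν = μ)
    (hcover : ∀ p : UnitAddCircle × UnitAddCircle,
      ((ψ p).1, m • (ψ p).2) = φ (p.1, m • p.2))
    (μψ : Measure (UnitAddCircle × UnitAddCircle))
    (hμψ : μψ = (m : ℝ≥0∞)⁻¹ • ∑ j ∈ Finset.Icc 1 m,
      Measure.map (fun x => (x, gammaJ m γ j x)) volume) :
    IsProbabilityMeasure μψ ∧ MeasurePreserving ⇑ψ μψ μψ := by
  haveI : IsProbabilityMeasure (volume : Measure UnitAddCircle) :=
    ⟨by rw [AddCircle.measure_univ]; norm_num⟩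
  have hm0 : (m : ℝ≥0∞) ≠ 0 := Nat.cast_ne_zero.2 (by omega)
  constructor
  · refine ⟨?_⟩
    rw [hμψ, Measure.smul_apply, Measure.coe_finset_sum, Finset.sum_apply]
    have hj1 : ∀ j ∈ Finset.Icc 1 m,
        (Measure.map (fun x => (x, gammaJ m γ j x)) volume) Set.univ = 1 := by
      intro j _
      rw [Measure.map_apply (meas_graph m γ hγ j) MeasurableSet.univ, Set.preimage_univ]
      exact measure_univ
    rw [Finset.sum_congr rfl hj1, Finset.sum_const, Nat.card_Icc]
    simp only [smul_eq_mul, nsmul_eq_mul, mul_one, Nat.add_sub_cancel]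
    exact ENNReal.inv_mul_cancel hm0 (by simp)
  · refine ⟨ψ.continuous.measurable, ?_⟩
    obtain ⟨c, hctors, hdeck⟩ := deck m hm α φ ψ hφskew hcover
    have hμψtors : ∀ c' : UnitAddCircle, m • c' = 0 →
        Measure.map (fun p : UnitAddCircle × UnitAddCircle => (p.1, p.2 + c')) μψ = μψ := by
      intro c' hc'
      rw [hμψ, Measure.map_smul, sum_graph_translate m γ hγ hm hc']
    have hprμψ : Measure.map (pr m) μψ = μ := by
      rw [hμψ, Measure.map_smul, map_fsum _ _ (meas_pr m)]
      have hj : ∀ j ∈ Finset.Icc 1 m,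
          Measure.map (pr m) (Measure.map (fun x => (x, gammaJ m γ j x)) volume) = μ := by
        intro j _
        rw [Measure.map_map (meas_pr m) (meas_graph m γ hγ j), hμ]
        congr 1
        funext x
        simp only [Function.comp_apply, pr]
        rw [msmul_gammaJ m γ hm j x]
      rw [Finset.sum_congr rfl hj, Finset.sum_const, Nat.card_Icc, Nat.add_sub_cancel,
        ← Nat.cast_smul_eq_nsmul ℝ≥0∞, smul_smul, ENNReal.inv_mul_cancel hm0 (by simp),
        one_smul]
    have hν_pr : Measure.map (pr m) (Measure.map (⇑ψ) μψ) = μ := by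
      rw [Measure.map_map (meas_pr m) ψ.continuous.measurable]
      have hcomm : pr m ∘ ⇑ψ = ⇑φ ∘ pr m := funext fun p => hcover p
      rw [hcomm, ← Measure.map_map φ.continuous.measurable (meas_pr m), hprμψ, hinv.map_eq]
    have hν_T : Measure.map (fun p : UnitAddCircle × UnitAddCircle => (p.1, p.2 + c0 m))
        (Measure.map (⇑ψ) μψ) = Measure.map (⇑ψ) μψ := by
      rw [Measure.map_map (meas_translate (c0 m)) ψ.continuous.measurable]
      have hcomm : (fun p : UnitAddCircle × UnitAddCircle => (p.1, p.2 + c0 m)) ∘ ⇑ψ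
          = ⇑ψ ∘ (fun p : UnitAddCircle × UnitAddCircle => (p.1, p.2 + c)) :=
        funext fun p => hdeck p
      rw [hcomm, ← Measure.map_map ψ.continuous.measurable (meas_translate c),
        hμψtors c hctors]
    exact unique_lift m hm _ _ hν_T (hμψtors (c0 m) (msmul_c0 m hm))
      (by rw [hν_pr, hprμψ])
end
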